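/- arXiv:2412.02869 — 15 statements merged into one kernel-verified Lean document; each statement's English description precedes it below -/
import Mathlib

section
/- Under the CSI constraints (Y ⊥ C | A=a, B), i.e. θY(y|true,b,c) does not depend on c, and (Y ⊥ B | A=ā, C), i.e. θY(y|false,b,c) does not depend on b, and assuming the observational joint distribution P is strictly positive, the causal effect satisfies P_x(y) = P(A=true, Y=y) + ∑_c P(Y=y | A=false, C=c) · P(C=c | X=x) · P(A=false) for all x and y. In particular, any two parameterizations satisfying these CSI constraints that induce the same strictly positive observational distribution P yield the same causal effect P_x(y) (Proposition 1, identifiable part). -/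
private lemma swap_out3 {ι U1 U2 U3 : Type*} [Fintype ι] [Fintype U1] [Fintype U2] [Fintype U3]
    (F : ι → U1 → U2 → U3 → ℝ) :
    ∑ i, ∑ u1, ∑ u2, ∑ u3, F i u1 u2 u3 = ∑ u1, ∑ u2, ∑ u3, ∑ i, F i u1 u2 u3 := by
  rw [Finset.sum_comm]
  refine Finset.sum_congr rfl fun u1 _ => ?_
  rw [Finset.sum_comm]
  refine Finset.sum_congr rfl fun u2 _ => ?_
  rw [Finset.sum_comm]

private lemma swap_out2 {ι U1 U2 : Type*} [Fintype ι] [Fintype U1] [Fintype U2]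
    (F : ι → U1 → U2 → ℝ) :
    ∑ i, ∑ u1, ∑ u2, F i u1 u2 = ∑ u1, ∑ u2, ∑ i, F i u1 u2 := by
  rw [Finset.sum_comm]
  refine Finset.sum_congr rfl fun u1 _ => ?_
  rw [Finset.sum_comm]

/-- **Proposition 1 (identifiable part).**
Model for the causal graph of Fig. 2(a): hidden variables `U1, U2, U3` range over
finite nonempty types; observed variables `X, A, B, C, Y` are binary (`Bool`).
Under the CSI constraints `(Y ⊥ C | A = a, B)` (i.e. `θY y true b c` does not depend
on `c`) and `(Y ⊥ B | A = ā, C)` (i.e. `θY y false b c` does not depend on `b`),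
and strict positivity of the observational distribution `P`, the causal effect
satisfies `P_x(y) = P(a, y) + ∑ c, P(y | ā, c) * P(c | x) * P(ā)`. -/
theorem constrained_id_prop1_identifiable
    {U1 U2 U3 : Type*} [Fintype U1] [Fintype U2] [Fintype U3]
    [Nonempty U1] [Nonempty U2] [Nonempty U3]
    (p1 : U1 → ℝ) (p2 : U2 → ℝ) (p3 : U3 → ℝ)
    (θX : Bool → ℝ)
    (θA : Bool → U1 → U2 → ℝ) (θB : Bool → U2 → U3 → ℝ)
    (θC : Bool → U3 → Bool → ℝ) (θY : Bool → Bool → Bool → Bool → ℝ)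
    (hp1 : ∀ u, 0 ≤ p1 u) (hp1s : ∑ u, p1 u = 1)
    (hp2 : ∀ u, 0 ≤ p2 u) (hp2s : ∑ u, p2 u = 1)
    (hp3 : ∀ u, 0 ≤ p3 u) (hp3s : ∑ u, p3 u = 1)
    (hθX : ∀ x, 0 ≤ θX x) (hθXs : ∑ x, θX x = 1)
    (hθA : ∀ a u1 u2, 0 ≤ θA a u1 u2) (hθAs : ∀ u1 u2, ∑ a, θA a u1 u2 = 1)
    (hθB : ∀ b u2 u3, 0 ≤ θB b u2 u3) (hθBs : ∀ u2 u3, ∑ b, θB b u2 u3 = 1)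
    (hθC : ∀ c u3 x, 0 ≤ θC c u3 x) (hθCs : ∀ u3 x, ∑ c, θC c u3 x = 1)
    (hθY : ∀ y a b c, 0 ≤ θY y a b c) (hθYs : ∀ a b c, ∑ y, θY y a b c = 1)
    -- observational joint distribution
    (P : Bool → Bool → Bool → Bool → Bool → ℝ)
    (hP : ∀ x a b c y, P x a b c y =
      θX x * ∑ u1, ∑ u2, ∑ u3, p1 u1 * p2 u2 * p3 u3 *
        θA a u1 u2 * θB b u2 u3 * θC c u3 x * θY y a b c)
    -- CSI constraint (Y ⊥ C | A = a, B)
    (hCSI1 : ∀ y b c c', θY y true b c = θY y true b c')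
    -- CSI constraint (Y ⊥ B | A = ā, C)
    (hCSI2 : ∀ y b b' c, θY y false b c = θY y false b' c)
    -- strict positivity of P
    (hpos : ∀ x a b c y, 0 < P x a b c y) :
    ∀ x y,
      -- causal effect P_x(y)
      (∑ a, ∑ b, ∑ c, ∑ u1, ∑ u2, ∑ u3, p1 u1 * p2 u2 * p3 u3 *
        θA a u1 u2 * θB b u2 u3 * θC c u3 x * θY y a b c)
      =
      -- P(A = true, Y = y)
      (∑ x', ∑ b, ∑ c, P x' true b c y)
      +
      -- ∑ c, P(y | ā, c) * P(c | x) * P(ā)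
      ∑ c, ((∑ x', ∑ b, P x' false b c y) / (∑ x', ∑ b, ∑ y', P x' false b c y'))
          * ((∑ a, ∑ b, ∑ y', P x a b c y') / (∑ a, ∑ b, ∑ c', ∑ y', P x a b c' y'))
          * (∑ x', ∑ b, ∑ c', ∑ y', P x' false b c' y') := by
  intro x y
  have hθXpos : ∀ x', 0 < θX x' := by
    intro x'
    rcases (hθX x').lt_or_eq with h | h
    · exact h
    · exfalso
      have h2 := hpos x' true true true true
      rw [hP, ← h, zero_mul] at h2
      exact lt_irrefl _ h2
  set S : Bool → Bool → Bool → Bool → ℝ := fun a b c x' =>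
    ∑ u1, ∑ u2, ∑ u3, p1 u1 * p2 u2 * p3 u3 * θA a u1 u2 * θB b u2 u3 * θC c u3 x' with hS
  have hPS : ∀ x' a b c y', P x' a b c y' = θX x' * (S a b c x' * θY y' a b c) := by
    intro x' a b c y'
    rw [hP]
    simp only [hS, ← Finset.sum_mul]
  have hPy : ∀ x' a b c, ∑ y', P x' a b c y' = θX x' * S a b c x' := by
    intro x' a b c
    simp only [hPS]
    rw [← Finset.mul_sum, ← Finset.mul_sum, hθYs, mul_one]
  have hSb : ∀ a c x', ∑ b, S a b c x' =
      (∑ u1, ∑ u2, p1 u1 * p2 u2 * θA a u1 u2) * (∑ u3, p3 u3 * θC c u3 x') := by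
    intro a c x'
    simp only [hS]
    rw [swap_out3]
    have h1 : ∀ u1 u2 u3, (∑ b, p1 u1 * p2 u2 * p3 u3 * θA a u1 u2 * θB b u2 u3 * θC c u3 x')
        = (p1 u1 * p2 u2 * θA a u1 u2) * (p3 u3 * θC c u3 x') := by
      intro u1 u2 u3
      calc ∑ b, p1 u1 * p2 u2 * p3 u3 * θA a u1 u2 * θB b u2 u3 * θC c u3 x'
          = (∑ b, θB b u2 u3) * ((p1 u1 * p2 u2 * θA a u1 u2) * (p3 u3 * θC c u3 x')) := by
            rw [Finset.sum_mul]
            exact Finset.sum_congr rfl fun b _ => by ring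
        _ = (p1 u1 * p2 u2 * θA a u1 u2) * (p3 u3 * θC c u3 x') := by rw [hθBs, one_mul]
    simp only [h1, ← Finset.mul_sum, ← Finset.sum_mul]
  have hSc : ∀ a b x', ∑ c, S a b c x' =
      ∑ u1, ∑ u2, ∑ u3, p1 u1 * p2 u2 * p3 u3 * θA a u1 u2 * θB b u2 u3 := by
    intro a b x'
    simp only [hS]
    rw [swap_out3]
    refine Finset.sum_congr rfl fun u1 _ => Finset.sum_congr rfl fun u2 _ =>
      Finset.sum_congr rfl fun u3 _ => ?_
    rw [← Finset.mul_sum, hθCs, mul_one]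
  have hAsum : ∀ a₀ : Bool, ∑ a, ∑ u1, ∑ u2, p1 u1 * p2 u2 * θA a u1 u2 = 1 := by
    intro _
    rw [swap_out2]
    have h1 : ∀ u1 u2, (∑ a, p1 u1 * p2 u2 * θA a u1 u2) = p1 u1 * p2 u2 := by
      intro u1 u2; rw [← Finset.mul_sum, hθAs, mul_one]
    simp only [h1, ← Finset.mul_sum, hp2s, mul_one]
    exact hp1s
  have hγsum : ∀ x', ∑ c, ∑ u3, p3 u3 * θC c u3 x' = 1 := by
    intro x'
    rw [Finset.sum_comm]
    have h1 : ∀ u3, (∑ c, p3 u3 * θC c u3 x') = p3 u3 := by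
      intro u3; rw [← Finset.mul_sum, hθCs, mul_one]
    simp only [h1]
    exact hp3s
  have hTsum : ∑ a, ∑ b, ∑ u1, ∑ u2, ∑ u3,
      p1 u1 * p2 u2 * p3 u3 * θA a u1 u2 * θB b u2 u3 = 1 := by
    have h1 : ∀ a : Bool, (∑ b, ∑ u1, ∑ u2, ∑ u3,
        p1 u1 * p2 u2 * p3 u3 * θA a u1 u2 * θB b u2 u3)
        = ∑ u1, ∑ u2, p1 u1 * p2 u2 * θA a u1 u2 := by
      intro a
      rw [swap_out3]
      refine Finset.sum_congr rfl fun u1 _ => Finset.sum_congr rfl fun u2 _ => ?_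
      have h2 : ∀ u3, (∑ b, p1 u1 * p2 u2 * p3 u3 * θA a u1 u2 * θB b u2 u3)
          = p1 u1 * p2 u2 * p3 u3 * θA a u1 u2 := by
        intro u3; rw [← Finset.mul_sum, hθBs, mul_one]
      simp only [h2]
      calc ∑ u3, p1 u1 * p2 u2 * p3 u3 * θA a u1 u2
          = (∑ u3, p3 u3) * (p1 u1 * p2 u2 * θA a u1 u2) := by
            rw [Finset.sum_mul]
            exact Finset.sum_congr rfl fun u3 _ => by ring
        _ = p1 u1 * p2 u2 * θA a u1 u2 := by rw [hp3s, one_mul]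
    simp only [h1]
    exact hAsum true
  -- the LHS (causal effect)
  have hLHS : (∑ a, ∑ b, ∑ c, ∑ u1, ∑ u2, ∑ u3, p1 u1 * p2 u2 * p3 u3 *
        θA a u1 u2 * θB b u2 u3 * θC c u3 x * θY y a b c)
      = (∑ b, (∑ u1, ∑ u2, ∑ u3, p1 u1 * p2 u2 * p3 u3 * θA true u1 u2 * θB b u2 u3)
            * θY y true b true)
        + ∑ c, θY y false true c * ((∑ u1, ∑ u2, p1 u1 * p2 u2 * θA false u1 u2)
            * (∑ u3, p3 u3 * θC c u3 x)) := by
    have hstep : ∀ a b c, (∑ u1, ∑ u2, ∑ u3, p1 u1 * p2 u2 * p3 u3 *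
        θA a u1 u2 * θB b u2 u3 * θC c u3 x * θY y a b c) = S a b c x * θY y a b c := by
      intro a b c; simp only [hS, ← Finset.sum_mul]
    simp only [hstep]
    rw [Fintype.sum_bool]
    congr 1
    · refine Finset.sum_congr rfl fun b _ => ?_
      calc ∑ c, S true b c x * θY y true b c
          = (∑ c, S true b c x) * θY y true b true := by
            rw [Finset.sum_mul]
            exact Finset.sum_congr rfl fun c _ => by rw [hCSI1 y b c true]
        _ = _ := by rw [hSc]
    · rw [Finset.sum_comm]
      refine Finset.sum_congr rfl fun c _ => ?_
      calc ∑ b, S false b c x * θY y false b c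
          = (∑ b, S false b c x) * θY y false true c := by
            rw [Finset.sum_mul]
            exact Finset.sum_congr rfl fun b _ => by rw [hCSI2 y b true c]
        _ = _ := by rw [hSb]; ring
  -- P(A = true, Y = y)
  have hterm1 : (∑ x', ∑ b, ∑ c, P x' true b c y)
      = ∑ b, (∑ u1, ∑ u2, ∑ u3, p1 u1 * p2 u2 * p3 u3 * θA true u1 u2 * θB b u2 u3)
          * θY y true b true := by
    have h1 : ∀ x', (∑ b, ∑ c, P x' true b c y)
        = θX x' * ∑ b, (∑ u1, ∑ u2, ∑ u3, p1 u1 * p2 u2 * p3 u3 * θA true u1 u2 * θB b u2 u3)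
            * θY y true b true := by
      intro x'
      simp only [hPS, ← Finset.mul_sum]
      congr 1
      refine Finset.sum_congr rfl fun b _ => ?_
      calc ∑ c, S true b c x' * θY y true b c
          = (∑ c, S true b c x') * θY y true b true := by
            rw [Finset.sum_mul]
            exact Finset.sum_congr rfl fun c _ => by rw [hCSI1 y b c true]
        _ = _ := by rw [hSc]
    simp only [h1]
    rw [← Finset.sum_mul, hθXs, one_mul]
  -- numerator of P(y | ā, c)
  have hN1 : ∀ c, (∑ x', ∑ b, P x' false b c y)
      = θY y false true c * ((∑ u1, ∑ u2, p1 u1 * p2 u2 * θA false u1 u2)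
          * (∑ x', θX x' * ∑ u3, p3 u3 * θC c u3 x')) := by
    intro c
    have h1 : ∀ x', (∑ b, P x' false b c y)
        = θY y false true c * ((∑ u1, ∑ u2, p1 u1 * p2 u2 * θA false u1 u2)
            * (θX x' * ∑ u3, p3 u3 * θC c u3 x')) := by
      intro x'
      simp only [hPS, ← Finset.mul_sum]
      rw [show (∑ b, S false b c x' * θY y false b c)
          = (∑ b, S false b c x') * θY y false true c from by
        rw [Finset.sum_mul]
        exact Finset.sum_congr rfl fun b _ => by rw [hCSI2 y b true c]]
      rw [hSb]; ring
    simp only [h1]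
    rw [← Finset.mul_sum, ← Finset.mul_sum]
  -- denominator of P(y | ā, c)
  have hD1 : ∀ c, (∑ x', ∑ b, ∑ y', P x' false b c y')
      = (∑ u1, ∑ u2, p1 u1 * p2 u2 * θA false u1 u2)
          * (∑ x', θX x' * ∑ u3, p3 u3 * θC c u3 x') := by
    intro c
    have h1 : ∀ x', (∑ b, ∑ y', P x' false b c y')
        = (∑ u1, ∑ u2, p1 u1 * p2 u2 * θA false u1 u2)
            * (θX x' * ∑ u3, p3 u3 * θC c u3 x') := by
      intro x'
      simp only [hPy]
      rw [← Finset.mul_sum, hSb]; ring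
    simp only [h1]
    rw [← Finset.mul_sum]
  have hD1pos : ∀ c, (0:ℝ) < ∑ x', ∑ b, ∑ y', P x' false b c y' := by
    intro c
    refine Finset.sum_pos (fun x' _ => Finset.sum_pos (fun b _ => Finset.sum_pos
      (fun y' _ => hpos x' false b c y') Finset.univ_nonempty) Finset.univ_nonempty)
      Finset.univ_nonempty
  -- numerator of P(c | x)
  have hN2 : ∀ c, (∑ a, ∑ b, ∑ y', P x a b c y')
      = θX x * (∑ u3, p3 u3 * θC c u3 x) := by
    intro c
    have h1 : ∀ a, (∑ b, ∑ y', P x a b c y')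
        = (∑ u1, ∑ u2, p1 u1 * p2 u2 * θA a u1 u2) * (θX x * ∑ u3, p3 u3 * θC c u3 x) := by
      intro a
      simp only [hPy]
      rw [← Finset.mul_sum, hSb]; ring
    simp only [h1]
    rw [← Finset.sum_mul, hAsum true, one_mul]
  -- denominator of P(c | x)
  have hD2 : (∑ a, ∑ b, ∑ c', ∑ y', P x a b c' y') = θX x := by
    have h1 : ∀ a b, (∑ c', ∑ y', P x a b c' y')
        = θX x * ∑ u1, ∑ u2, ∑ u3, p1 u1 * p2 u2 * p3 u3 * θA a u1 u2 * θB b u2 u3 := by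
      intro a b
      simp only [hPy]
      rw [← Finset.mul_sum, hSc]
    simp only [h1, ← Finset.mul_sum]
    rw [hTsum, mul_one]
  -- P(ā)
  have hPabar : (∑ x', ∑ b, ∑ c', ∑ y', P x' false b c' y')
      = ∑ u1, ∑ u2, p1 u1 * p2 u2 * θA false u1 u2 := by
    have h1 : ∀ x', (∑ b, ∑ c', ∑ y', P x' false b c' y')
        = θX x' * ∑ u1, ∑ u2, p1 u1 * p2 u2 * θA false u1 u2 := by
      intro x'
      simp only [hPy, ← Finset.mul_sum]
      congr 1
      rw [Finset.sum_comm]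
      calc ∑ c', ∑ b, S false b c' x'
          = ∑ c', (∑ u1, ∑ u2, p1 u1 * p2 u2 * θA false u1 u2)
              * (∑ u3, p3 u3 * θC c' u3 x') := Finset.sum_congr rfl fun c' _ => hSb false c' x'
        _ = (∑ u1, ∑ u2, p1 u1 * p2 u2 * θA false u1 u2)
              * ∑ c', ∑ u3, p3 u3 * θC c' u3 x' := by rw [Finset.mul_sum]
        _ = _ := by rw [hγsum x', mul_one]
    simp only [h1]
    rw [← Finset.sum_mul, hθXs, one_mul]
  rw [hLHS, hterm1]
  congr 1
  refine Finset.sum_congr rfl fun c _ => ?_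
  have hd1ne : ((∑ u1, ∑ u2, p1 u1 * p2 u2 * θA false u1 u2)
      * (∑ x', θX x' * ∑ u3, p3 u3 * θC c u3 x')) ≠ 0 := by
    rw [← hD1 c]; exact (hD1pos c).ne'
  rw [hN1 c, hD1 c, hN2 c, hD2, hPabar]
  rw [mul_div_assoc, div_self hd1ne, mul_one,
    mul_div_cancel_left₀ _ (hθXpos x).ne']
  ring
end

section
/- Assume the CSI constraint (Y ⊥ C | A=a, B): θY(y|true,b,c) does not depend on c. Then for all x and y, ∑_{b,c} P_x(A=true, b, c, y) = P(A=true, Y=y), where the right-hand side is the marginal of the observational joint distribution P (intermediate claim in the proof of Proposition 1). -/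
/-- **Intermediate claim in the proof of Proposition 1.**
Model for the causal graph of Fig. 2(a). Under the CSI constraint
`(Y ⊥ C | A = a, B)` (i.e. `θY y true b c` does not depend on `c`),
for all `x` and `y`, `∑ b c, P_x(A = true, b, c, y) = P(A = true, Y = y)`. -/
theorem constrained_id_prop1_intermediate_a
    {U1 U2 U3 : Type*} [Fintype U1] [Fintype U2] [Fintype U3]
    [Nonempty U1] [Nonempty U2] [Nonempty U3]
    (p1 : U1 → ℝ) (p2 : U2 → ℝ) (p3 : U3 → ℝ)
    (θX : Bool → ℝ)
    (θA : Bool → U1 → U2 → ℝ) (θB : Bool → U2 → U3 → ℝ)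
    (θC : Bool → U3 → Bool → ℝ) (θY : Bool → Bool → Bool → Bool → ℝ)
    (hp1 : ∀ u, 0 ≤ p1 u) (hp1s : ∑ u, p1 u = 1)
    (hp2 : ∀ u, 0 ≤ p2 u) (hp2s : ∑ u, p2 u = 1)
    (hp3 : ∀ u, 0 ≤ p3 u) (hp3s : ∑ u, p3 u = 1)
    (hθX : ∀ x, 0 ≤ θX x) (hθXs : ∑ x, θX x = 1)
    (hθA : ∀ a u1 u2, 0 ≤ θA a u1 u2) (hθAs : ∀ u1 u2, ∑ a, θA a u1 u2 = 1)
    (hθB : ∀ b u2 u3, 0 ≤ θB b u2 u3) (hθBs : ∀ u2 u3, ∑ b, θB b u2 u3 = 1)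
    (hθC : ∀ c u3 x, 0 ≤ θC c u3 x) (hθCs : ∀ u3 x, ∑ c, θC c u3 x = 1)
    (hθY : ∀ y a b c, 0 ≤ θY y a b c) (hθYs : ∀ a b c, ∑ y, θY y a b c = 1)
    -- observational joint distribution
    (P : Bool → Bool → Bool → Bool → Bool → ℝ)
    (hP : ∀ x a b c y, P x a b c y =
      θX x * ∑ u1, ∑ u2, ∑ u3, p1 u1 * p2 u2 * p3 u3 *
        θA a u1 u2 * θB b u2 u3 * θC c u3 x * θY y a b c)
    -- CSI constraint (Y ⊥ C | A = a, B)
    (hCSI1 : ∀ y b c c', θY y true b c = θY y true b c') :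
    ∀ x y,
      -- ∑ b c, P_x(A = true, b, c, y)
      (∑ b, ∑ c, ∑ u1, ∑ u2, ∑ u3, p1 u1 * p2 u2 * p3 u3 *
        θA true u1 u2 * θB b u2 u3 * θC c u3 x * θY y true b c)
      =
      -- P(A = true, Y = y)
      (∑ x', ∑ b, ∑ c, P x' true b c y) := by
  intro x y
  have hc : ∀ (u3 : U3) (x : Bool) (b : Bool),
      (∑ c, θC c u3 x * θY y true b c) = θY y true b true := by
    intro u3 x b
    calc (∑ c, θC c u3 x * θY y true b c)
        = ∑ c, θC c u3 x * θY y true b true :=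
          Finset.sum_congr rfl (fun c _ => by rw [hCSI1 y b c true])
      _ = (∑ c, θC c u3 x) * θY y true b true := by rw [Finset.sum_mul]
      _ = θY y true b true := by rw [hθCs, one_mul]
  have key : ∀ x : Bool,
      (∑ b, ∑ c, ∑ u1, ∑ u2, ∑ u3, p1 u1 * p2 u2 * p3 u3 *
        θA true u1 u2 * θB b u2 u3 * θC c u3 x * θY y true b c)
      = ∑ b, ∑ u1, ∑ u2, ∑ u3, p1 u1 * p2 u2 * p3 u3 *
        θA true u1 u2 * θB b u2 u3 * θY y true b true := by
    intro x
    refine Finset.sum_congr rfl fun b _ => ?_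
    rw [Finset.sum_comm]
    refine Finset.sum_congr rfl fun u1 _ => ?_
    rw [Finset.sum_comm]
    refine Finset.sum_congr rfl fun u2 _ => ?_
    rw [Finset.sum_comm]
    refine Finset.sum_congr rfl fun u3 _ => ?_
    rw [← hc u3 x b, Finset.mul_sum]
    exact Finset.sum_congr rfl fun c _ => by ring
  have hR : ∀ x' : Bool, (∑ b, ∑ c, P x' true b c y)
      = θX x' * ∑ b, ∑ u1, ∑ u2, ∑ u3, p1 u1 * p2 u2 * p3 u3 *
        θA true u1 u2 * θB b u2 u3 * θY y true b true := by
    intro x'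
    simp only [hP, ← Finset.mul_sum]
    rw [key x']
  rw [key x]
  simp only [hR]
  rw [← Finset.sum_mul, hθXs, one_mul]
end

section
/- Assume the CSI constraint (Y ⊥ B | A=ā, C): θY(y|false,b,c) does not depend on b, and assume the observational joint distribution P is strictly positive. Then for all x and y, ∑_{b,c} P_x(A=false, b, c, y) = ∑_c P(Y=y | A=false, C=c) · P(C=c | X=x) · P(A=false) (intermediate claim in the proof of Proposition 1). -/
private lemma tri_factor {U1 U2 U3 : Type*} [Fintype U1] [Fintype U2] [Fintype U3]
    (f : U1 → U2 → ℝ) (g : U3 → ℝ) :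
    ∑ u1, ∑ u2, ∑ u3, f u1 u2 * g u3 = (∑ u1, ∑ u2, f u1 u2) * (∑ u3, g u3) := by
  rw [Finset.sum_mul]
  refine Finset.sum_congr rfl fun u1 _ => ?_
  rw [Finset.sum_mul]
  exact Finset.sum_congr rfl fun u2 _ => (Finset.mul_sum _ _ _).symm

private lemma sum_swap_inner3 {β U1 U2 U3 : Type*} [Fintype β] [Fintype U1] [Fintype U2]
    [Fintype U3] (f : β → U1 → U2 → U3 → ℝ) :
    ∑ b, ∑ u1, ∑ u2, ∑ u3, f b u1 u2 u3 = ∑ u1, ∑ u2, ∑ u3, ∑ b, f b u1 u2 u3 := by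
  rw [Finset.sum_comm]
  refine Finset.sum_congr rfl fun u1 _ => ?_
  rw [Finset.sum_comm]
  exact Finset.sum_congr rfl fun u2 _ => Finset.sum_comm

/-- **Intermediate claim in the proof of Proposition 1.**
Model for the causal graph of Fig. 2(a). Under the CSI constraint
`(Y ⊥ B | A = ā, C)` (i.e. `θY y false b c` does not depend on `b`),
and strict positivity of the observational distribution `P`, for all `x` and `y`,
`∑ b c, P_x(A = false, b, c, y) = ∑ c, P(y | ā, c) * P(c | x) * P(ā)`. -/
theorem constrained_id_prop1_intermediate_abar
    {U1 U2 U3 : Type*} [Fintype U1] [Fintype U2] [Fintype U3]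
    [Nonempty U1] [Nonempty U2] [Nonempty U3]
    (p1 : U1 → ℝ) (p2 : U2 → ℝ) (p3 : U3 → ℝ)
    (θX : Bool → ℝ)
    (θA : Bool → U1 → U2 → ℝ) (θB : Bool → U2 → U3 → ℝ)
    (θC : Bool → U3 → Bool → ℝ) (θY : Bool → Bool → Bool → Bool → ℝ)
    (hp1 : ∀ u, 0 ≤ p1 u) (hp1s : ∑ u, p1 u = 1)
    (hp2 : ∀ u, 0 ≤ p2 u) (hp2s : ∑ u, p2 u = 1)
    (hp3 : ∀ u, 0 ≤ p3 u) (hp3s : ∑ u, p3 u = 1)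
    (hθX : ∀ x, 0 ≤ θX x) (hθXs : ∑ x, θX x = 1)
    (hθA : ∀ a u1 u2, 0 ≤ θA a u1 u2) (hθAs : ∀ u1 u2, ∑ a, θA a u1 u2 = 1)
    (hθB : ∀ b u2 u3, 0 ≤ θB b u2 u3) (hθBs : ∀ u2 u3, ∑ b, θB b u2 u3 = 1)
    (hθC : ∀ c u3 x, 0 ≤ θC c u3 x) (hθCs : ∀ u3 x, ∑ c, θC c u3 x = 1)
    (hθY : ∀ y a b c, 0 ≤ θY y a b c) (hθYs : ∀ a b c, ∑ y, θY y a b c = 1)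
    -- observational joint distribution
    (P : Bool → Bool → Bool → Bool → Bool → ℝ)
    (hP : ∀ x a b c y, P x a b c y =
      θX x * ∑ u1, ∑ u2, ∑ u3, p1 u1 * p2 u2 * p3 u3 *
        θA a u1 u2 * θB b u2 u3 * θC c u3 x * θY y a b c)
    -- CSI constraint (Y ⊥ B | A = ā, C)
    (hCSI2 : ∀ y b b' c, θY y false b c = θY y false b' c)
    -- strict positivity of P
    (hpos : ∀ x a b c y, 0 < P x a b c y) :
    ∀ x y,
      -- ∑ b c, P_x(A = false, b, c, y)
      (∑ b, ∑ c, ∑ u1, ∑ u2, ∑ u3, p1 u1 * p2 u2 * p3 u3 *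
        θA false u1 u2 * θB b u2 u3 * θC c u3 x * θY y false b c)
      =
      -- ∑ c, P(y | ā, c) * P(c | x) * P(ā)
      ∑ c, ((∑ x', ∑ b, P x' false b c y) / (∑ x', ∑ b, ∑ y', P x' false b c y'))
          * ((∑ a, ∑ b, ∑ y', P x a b c y') / (∑ a, ∑ b, ∑ c', ∑ y', P x a b c' y'))
          * (∑ x', ∑ b, ∑ c', ∑ y', P x' false b c' y') := by
  intro x y
  -- abbreviations
  set A : Bool → ℝ := fun a => ∑ u1, ∑ u2, p1 u1 * p2 u2 * θA a u1 u2 with hA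
  set G : Bool → Bool → ℝ := fun c x' => ∑ u3, p3 u3 * θC c u3 x' with hG
  -- ∑ c, G c x' = 1
  have hGsum : ∀ x', ∑ c, G c x' = 1 := by
    intro x'
    calc ∑ c, ∑ u3, p3 u3 * θC c u3 x' = ∑ u3, ∑ c, p3 u3 * θC c u3 x' := Finset.sum_comm
      _ = ∑ u3, p3 u3 * ∑ c, θC c u3 x' := by
          exact Finset.sum_congr rfl fun u3 _ => (Finset.mul_sum _ _ _).symm
      _ = ∑ u3, p3 u3 := Finset.sum_congr rfl fun u3 _ => by rw [hθCs, mul_one]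
      _ = 1 := hp3s
  -- ∑ a, A a = 1
  have hAsum : ∑ a, A a = 1 := by
    rw [hA]
    rw [Finset.sum_comm]
    calc ∑ u1, ∑ a, ∑ u2, p1 u1 * p2 u2 * θA a u1 u2
        = ∑ u1, ∑ u2, ∑ a, p1 u1 * p2 u2 * θA a u1 u2 :=
          Finset.sum_congr rfl fun u1 _ => Finset.sum_comm
      _ = ∑ u1, ∑ u2, p1 u1 * p2 u2 * ∑ a, θA a u1 u2 := by
          refine Finset.sum_congr rfl fun u1 _ => Finset.sum_congr rfl fun u2 _ => ?_
          rw [Finset.mul_sum]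
      _ = 1 := by
          simp only [hθAs, mul_one]
          rw [← Finset.sum_mul_sum, hp1s, hp2s, one_mul]
  -- S1 : ∑ b of the triple sum with a = false, y fixed
  have S1 : ∀ x' c, (∑ b, ∑ u1, ∑ u2, ∑ u3, p1 u1 * p2 u2 * p3 u3 *
      θA false u1 u2 * θB b u2 u3 * θC c u3 x' * θY y false b c)
      = θY y false true c * (A false * G c x') := by
    intro x' c
    rw [sum_swap_inner3]
    calc ∑ u1, ∑ u2, ∑ u3, ∑ b, p1 u1 * p2 u2 * p3 u3 *
          θA false u1 u2 * θB b u2 u3 * θC c u3 x' * θY y false b c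
        = ∑ u1, ∑ u2, ∑ u3, (p1 u1 * p2 u2 * θA false u1 u2) *
            (p3 u3 * θC c u3 x' * θY y false true c) := by
          refine Finset.sum_congr rfl fun u1 _ => Finset.sum_congr rfl fun u2 _ =>
            Finset.sum_congr rfl fun u3 _ => ?_
          have hB := hθBs u2 u3
          simp only [Fintype.sum_bool] at hB ⊢
          rw [hCSI2 y false true c]
          linear_combination (p1 u1 * p2 u2 * p3 u3 * θA false u1 u2 * θC c u3 x' *
            θY y false true c) * hB
      _ = A false * ∑ u3, p3 u3 * θC c u3 x' * θY y false true c :=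
          tri_factor _ _
      _ = θY y false true c * (A false * G c x') := by
          rw [hG]
          rw [show (∑ u3, p3 u3 * θC c u3 x' * θY y false true c)
              = (∑ u3, p3 u3 * θC c u3 x') * θY y false true c by
            rw [Finset.sum_mul]]
          ring
  -- S2 : ∑ b ∑ y' of the triple sum, any a
  have S2 : ∀ x' a c, (∑ b, ∑ y', ∑ u1, ∑ u2, ∑ u3, p1 u1 * p2 u2 * p3 u3 *
      θA a u1 u2 * θB b u2 u3 * θC c u3 x' * θY y' a b c) = A a * G c x' := by
    intro x' a c
    have step : ∀ b : Bool, (∑ y', ∑ u1, ∑ u2, ∑ u3, p1 u1 * p2 u2 * p3 u3 *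
        θA a u1 u2 * θB b u2 u3 * θC c u3 x' * θY y' a b c)
        = ∑ u1, ∑ u2, ∑ u3, p1 u1 * p2 u2 * p3 u3 *
            θA a u1 u2 * θB b u2 u3 * θC c u3 x' := by
      intro b
      rw [sum_swap_inner3]
      refine Finset.sum_congr rfl fun u1 _ => Finset.sum_congr rfl fun u2 _ =>
        Finset.sum_congr rfl fun u3 _ => ?_
      have hY := hθYs a b c
      simp only [Fintype.sum_bool] at hY ⊢
      linear_combination (p1 u1 * p2 u2 * p3 u3 * θA a u1 u2 * θB b u2 u3 *
        θC c u3 x') * hY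
    simp only [step]
    rw [sum_swap_inner3]
    calc ∑ u1, ∑ u2, ∑ u3, ∑ b, p1 u1 * p2 u2 * p3 u3 *
          θA a u1 u2 * θB b u2 u3 * θC c u3 x'
        = ∑ u1, ∑ u2, ∑ u3, (p1 u1 * p2 u2 * θA a u1 u2) * (p3 u3 * θC c u3 x') := by
          refine Finset.sum_congr rfl fun u1 _ => Finset.sum_congr rfl fun u2 _ =>
            Finset.sum_congr rfl fun u3 _ => ?_
          have hB := hθBs u2 u3
          simp only [Fintype.sum_bool] at hB ⊢
          linear_combination (p1 u1 * p2 u2 * p3 u3 * θA a u1 u2 * θC c u3 x') * hB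
      _ = A a * G c x' := tri_factor _ _
  -- Numerator 1
  have N1 : ∀ c, (∑ x', ∑ b, P x' false b c y)
      = θY y false true c * (A false * ∑ x', θX x' * G c x') := by
    intro c
    simp only [hP]
    calc ∑ x', ∑ b, θX x' * ∑ u1, ∑ u2, ∑ u3, p1 u1 * p2 u2 * p3 u3 *
          θA false u1 u2 * θB b u2 u3 * θC c u3 x' * θY y false b c
        = ∑ x', θX x' * (θY y false true c * (A false * G c x')) := by
          refine Finset.sum_congr rfl fun x' _ => ?_
          rw [← Finset.mul_sum, S1]
      _ = θY y false true c * (A false * ∑ x', θX x' * G c x') := by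
          rw [Finset.mul_sum, Finset.mul_sum]
          exact Finset.sum_congr rfl fun x' _ => by ring
  -- Denominator 1
  have D1 : ∀ c, (∑ x', ∑ b, ∑ y', P x' false b c y')
      = A false * ∑ x', θX x' * G c x' := by
    intro c
    simp only [hP]
    calc ∑ x', ∑ b, ∑ y', θX x' * ∑ u1, ∑ u2, ∑ u3, p1 u1 * p2 u2 * p3 u3 *
          θA false u1 u2 * θB b u2 u3 * θC c u3 x' * θY y' false b c
        = ∑ x', θX x' * (A false * G c x') := by
          refine Finset.sum_congr rfl fun x' _ => ?_
          simp only [← Finset.mul_sum]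
          rw [S2 x' false c]
      _ = A false * ∑ x', θX x' * G c x' := by
          rw [Finset.mul_sum]
          exact Finset.sum_congr rfl fun x' _ => by ring
  -- Numerator 2
  have N2 : ∀ c, (∑ a, ∑ b, ∑ y', P x a b c y') = θX x * G c x := by
    intro c
    simp only [hP]
    calc ∑ a, ∑ b, ∑ y', θX x * ∑ u1, ∑ u2, ∑ u3, p1 u1 * p2 u2 * p3 u3 *
          θA a u1 u2 * θB b u2 u3 * θC c u3 x * θY y' a b c
        = ∑ a, θX x * (A a * G c x) := by
          refine Finset.sum_congr rfl fun a _ => ?_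
          simp only [← Finset.mul_sum]
          rw [S2 x a c]
      _ = θX x * G c x := by
          rw [show (∑ a, θX x * (A a * G c x)) = (∑ a, A a) * (θX x * G c x) by
            rw [Finset.sum_mul]; exact Finset.sum_congr rfl fun a _ => by ring]
          rw [hAsum]; ring
  -- Denominator 2
  have D2 : (∑ a, ∑ b, ∑ c', ∑ y', P x a b c' y') = θX x := by
    calc ∑ a, ∑ b, ∑ c', ∑ y', P x a b c' y'
        = ∑ c', ∑ a, ∑ b, ∑ y', P x a b c' y' := by
          rw [show (∑ a, ∑ b, ∑ c', ∑ y', P x a b c' y')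
              = ∑ a, ∑ c', ∑ b, ∑ y', P x a b c' y' from
            Finset.sum_congr rfl fun a _ => Finset.sum_comm]
          exact Finset.sum_comm
      _ = ∑ c', θX x * G c' x := Finset.sum_congr rfl fun c' _ => N2 c'
      _ = θX x := by rw [← Finset.mul_sum, hGsum, mul_one]
  -- P(ā)
  have T3 : (∑ x', ∑ b, ∑ c', ∑ y', P x' false b c' y') = A false := by
    calc ∑ x', ∑ b, ∑ c', ∑ y', P x' false b c' y'
        = ∑ x', ∑ c', ∑ b, ∑ y', P x' false b c' y' := by
          refine Finset.sum_congr rfl fun x' _ => ?_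
          rw [Finset.sum_comm]
      _ = ∑ x', ∑ c', θX x' * (A false * G c' x') := by
          refine Finset.sum_congr rfl fun x' _ => Finset.sum_congr rfl fun c' _ => ?_
          simp only [hP, ← Finset.mul_sum]
          rw [S2 x' false c']
      _ = A false := by
          rw [show (∑ x', ∑ c', θX x' * (A false * G c' x'))
              = ∑ x', θX x' * A false * ∑ c', G c' x' by
            refine Finset.sum_congr rfl fun x' _ => ?_
            rw [Finset.mul_sum]
            exact Finset.sum_congr rfl fun c' _ => by ring]
          simp only [hGsum, mul_one]
          rw [show (∑ x', θX x' * A false) = (∑ x', θX x') * A false from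
            (Finset.sum_mul _ _ _).symm, hθXs, one_mul]
  -- positivity facts
  have hBne : (Finset.univ : Finset Bool).Nonempty := Finset.univ_nonempty
  have hD1pos : ∀ c, 0 < ∑ x', ∑ b, ∑ y', P x' false b c y' := fun c =>
    Finset.sum_pos (fun x' _ => Finset.sum_pos (fun b _ =>
      Finset.sum_pos (fun y' _ => hpos _ _ _ _ _) hBne) hBne) hBne
  have hD2pos : 0 < ∑ a, ∑ b, ∑ c', ∑ y', P x a b c' y' :=
    Finset.sum_pos (fun a _ => Finset.sum_pos (fun b _ => Finset.sum_pos (fun c' _ =>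
      Finset.sum_pos (fun y' _ => hpos _ _ _ _ _) hBne) hBne) hBne) hBne
  have hθXne : θX x ≠ 0 := by
    intro h; rw [D2] at hD2pos; rw [h] at hD2pos; exact lt_irrefl 0 hD2pos
  -- final assembly
  rw [Finset.sum_comm]
  refine Finset.sum_congr rfl fun c _ => ?_
  have hden1 : A false * (∑ x', θX x' * G c x') ≠ 0 := by
    have := hD1pos c
    rw [D1 c] at this
    exact ne_of_gt this
  rw [S1 x c, N1 c, D1 c, N2 c, D2, T3]
  rw [mul_div_cancel_right₀ _ hden1, mul_div_cancel_left₀ _ hθXne]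
  ring
end

section
/- Let X and Y be finite types each with at least two elements. For every strictly positive probability distribution Pr* on X × Y and every x₁ ∈ X and y₁ ∈ Y, there exist two parameterizations (p¹,q¹,r¹) and (p²,q²,r²) of the bow graph, both inducing Pr* (i.e., ∑_u pⁱ(u)qⁱ(x|u)rⁱ(y|u,x) = Pr*(x,y) for all x, y and i = 1, 2), whose causal effects differ: ∑_u p¹(u)r¹(y₁|u,x₁) ≠ ∑_u p²(u)r²(y₁|u,x₁). Hence the causal effect P_{x₁}(y₁) is unidentifiable under every fixed strictly positive observational distribution Pr*(X,Y) (Proposition 2). -/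
private lemma sum_ite_ne_aux {α : Type*} [Fintype α] [DecidableEq α]
    (a : α) (g : α → ℝ) :
    ∑ x, (if x = a then 0 else g x) = (∑ x, g x) - g a := by
  rw [← Finset.add_sum_erase _ _ (Finset.mem_univ a), if_pos rfl, zero_add]
  rw [Finset.sum_congr rfl (fun x hx => if_neg (Finset.ne_of_mem_erase hx)),
    Finset.sum_erase_eq_sub (Finset.mem_univ a)]

/-- **Proposition 2.** Bow-graph model (hidden binary confounder `U` of `X` and
`Y`, edge `X → Y`). For every strictly positive probability distribution `Pr*`
on `X × Y` (with `X`, `Y` finite types of cardinality at least two) and every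
`x₁ ∈ X`, `y₁ ∈ Y`, there are two parameterizations `(p¹, q¹, r¹)` and
`(p², q², r²)` both inducing `Pr*` whose causal effects `P_{x₁}(y₁)` differ.
Hence the causal effect is unidentifiable under every fixed strictly positive
observational distribution. -/
theorem bow_graph_unidentifiable_for_every_fixed_obs
    (X Y : Type*) [Fintype X] [Fintype Y]
    (hX : 2 ≤ Fintype.card X) (hY : 2 ≤ Fintype.card Y)
    (Pstar : X → Y → ℝ)
    (hpos : ∀ x y, 0 < Pstar x y)
    (hsum : ∑ x, ∑ y, Pstar x y = 1)
    (x₁ : X) (y₁ : Y) :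
    ∃ (p₁ p₂ : Bool → ℝ) (q₁ q₂ : Bool → X → ℝ) (r₁ r₂ : Bool → X → Y → ℝ),
      -- (p₁, q₁, r₁) is a parameterization of the bow graph
      (∀ u, 0 ≤ p₁ u) ∧ (∑ u, p₁ u = 1) ∧
      (∀ u x, 0 ≤ q₁ u x) ∧ (∀ u, ∑ x, q₁ u x = 1) ∧
      (∀ u x y, 0 ≤ r₁ u x y) ∧ (∀ u x, ∑ y, r₁ u x y = 1) ∧
      -- (p₂, q₂, r₂) is a parameterization of the bow graph
      (∀ u, 0 ≤ p₂ u) ∧ (∑ u, p₂ u = 1) ∧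
      (∀ u x, 0 ≤ q₂ u x) ∧ (∀ u, ∑ x, q₂ u x = 1) ∧
      (∀ u x y, 0 ≤ r₂ u x y) ∧ (∀ u x, ∑ y, r₂ u x y = 1) ∧
      -- both induce the observational distribution Pr*
      (∀ x y, ∑ u, p₁ u * q₁ u x * r₁ u x y = Pstar x y) ∧
      (∀ x y, ∑ u, p₂ u * q₂ u x * r₂ u x y = Pstar x y) ∧
      -- but the causal effects P_{x₁}(y₁) differ
      (∑ u, p₁ u * r₁ u x₁ y₁) ≠ (∑ u, p₂ u * r₂ u x₁ y₁) := by
  classical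
  haveI : Nonempty Y := ⟨y₁⟩
  -- marginal of X
  set Px : X → ℝ := fun x => ∑ y, Pstar x y with hPx
  have hPxpos : ∀ x, 0 < Px x := fun x =>
    Finset.sum_pos (fun y _ => hpos x y) Finset.univ_nonempty
  obtain ⟨x₂, hx₂⟩ := Fintype.exists_ne_of_one_lt_card (by omega) x₁
  obtain ⟨y₂, hy₂⟩ := Fintype.exists_ne_of_one_lt_card (by omega) y₁
  set a : ℝ := Px x₁ with ha
  have hsumPx : ∑ x, Px x = 1 := hsum
  have ha0 : 0 < a := hPxpos x₁
  have ha1 : a < 1 := by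
    have h1 : Px x₂ ≤ ∑ x ∈ Finset.univ.erase x₁, Px x :=
      Finset.single_le_sum (fun x _ => (hPxpos x).le)
        (Finset.mem_erase.2 ⟨hx₂, Finset.mem_univ _⟩)
    have h2 : ∑ x ∈ Finset.univ.erase x₁, Px x = 1 - a := by
      rw [Finset.sum_erase_eq_sub (Finset.mem_univ x₁), hsumPx]
    have := hPxpos x₂
    linarith
  have ha1' : (0:ℝ) < 1 - a := by linarith
  -- conditional distribution of Y given X
  set c : X → Y → ℝ := fun x y => Pstar x y / Px x with hc
  have hc_nonneg : ∀ x y, 0 ≤ c x y := fun x y =>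
    div_nonneg (hpos x y).le (hPxpos x).le
  have hc_sum : ∀ x, ∑ y, c x y = 1 := fun x => by
    rw [hc]
    simp only [← Finset.sum_div]
    exact div_self (hPxpos x).ne'
  have hc_mul : ∀ x y, Px x * c x y = Pstar x y := fun x y => by
    rw [hc, mul_comm, div_mul_cancel₀ _ (hPxpos x).ne']
  refine ⟨(fun u => if u then 1 else 0), (fun u => if u then a else 1 - a),
    (fun _ x => Px x),
    (fun u x => if u then (if x = x₁ then 1 else 0)
      else (if x = x₁ then 0 else Px x / (1 - a))),
    (fun _ x y => c x y),
    (fun u x y => if u then c x y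
      else (if x = x₁ then (if y = y₂ then 1 else 0) else c x y)),
    ?_, ?_, ?_, ?_, ?_, ?_, ?_, ?_, ?_, ?_, ?_, ?_, ?_, ?_, ?_⟩
  · intro u; cases u <;> simp
  · simp [Fintype.sum_bool]
  · intro u x; exact (hPxpos x).le
  · intro u; exact hsumPx
  · intro u x y; exact hc_nonneg x y
  · intro u x; exact hc_sum x
  · intro u; cases u <;> simp [ha0.le, ha1'.le]
  · simp [Fintype.sum_bool]
  · intro u x
    cases u <;> simp only [if_true, if_false, Bool.false_eq_true]
    · split
      · exact le_refl 0
      · exact div_nonneg (hPxpos x).le ha1'.le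
    · split <;> norm_num
  · intro u
    cases u <;> simp only [if_true, if_false, Bool.false_eq_true]
    · rw [sum_ite_ne_aux x₁ (fun x => Px x / (1 - a))]
      rw [← Finset.sum_div, hsumPx]
      field_simp
      rw [ha]
    · rw [Finset.sum_ite_eq' Finset.univ x₁ (fun _ => (1:ℝ))]
      simp
  · intro u x y
    cases u <;> simp only [if_true, if_false, Bool.false_eq_true]
    · split
      · split <;> norm_num
      · exact hc_nonneg x y
    · exact hc_nonneg x y
  · intro u x
    cases u <;> simp only [if_true, if_false, Bool.false_eq_true]
    · split
      · rw [Finset.sum_ite_eq' Finset.univ y₂ (fun _ => (1:ℝ))]; simp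
      · exact hc_sum x
    · exact hc_sum x
  · intro x y
    simp [Fintype.sum_bool, hc_mul x y]
  · intro x y
    rw [Fintype.sum_bool]
    by_cases hx : x = x₁
    · simp only [if_pos hx, if_true, Bool.false_eq_true, if_false]
      rw [hx, ← hc_mul x₁ y, ← ha]
      ring
    · simp only [if_true, if_neg hx, Bool.false_eq_true, if_false]
      rw [← hc_mul x y]
      field_simp
      ring
  · rw [Fintype.sum_bool, Fintype.sum_bool]
    simp only [if_true, if_pos rfl, Bool.false_eq_true, if_false,
      if_neg (Ne.symm hy₂ : ¬ y₁ = y₂)]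
    have hval : Pstar x₁ y₁ = a * c x₁ y₁ := (hc_mul x₁ y₁).symm
    have hcpos : 0 < c x₁ y₁ := div_pos (hpos x₁ y₁) ha0
    intro h
    -- h : 1 * c x₁ y₁ + 0 * c x₁ y₁ = a * c x₁ y₁ + (1-a) * 0
    nlinarith [h, hcpos, ha1]
end

section
/- Let X and Y be finite types each with at least two elements. For every strictly positive probability distribution Pr* on X × Y there exists a parameterization (p,q,r) of the bow graph inducing Pr* (i.e., ∑_u p(u)q(x|u)r(y|u,x) = Pr*(x,y) for all x, y) such that (i) all parameters are strictly positive: p(u) > 0, q(x|u) > 0 and r(y|u,x) > 0 for all u, x, y; and (ii) q(x|true) ≠ q(x|false) for every x ∈ X (Lemma in the proof of Proposition 2). -/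
/-- **Lemma in the proof of Proposition 2.** Bow-graph model (hidden binary
confounder `U` of `X` and `Y`, edge `X → Y`). For every strictly positive
probability distribution `Pr*` on `X × Y` (with `X`, `Y` finite types of
cardinality at least two) there is a parameterization `(p, q, r)` of the bow
graph inducing `Pr*` such that (i) all parameters are strictly positive and
(ii) `q(x | true) ≠ q(x | false)` for every `x`. -/
theorem bow_graph_positive_parameterization_exists
    (X Y : Type*) [Fintype X] [Fintype Y]
    (hX : 2 ≤ Fintype.card X) (hY : 2 ≤ Fintype.card Y)
    (Pstar : X → Y → ℝ)
    (hpos : ∀ x y, 0 < Pstar x y)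
    (hsum : ∑ x, ∑ y, Pstar x y = 1) :
    ∃ (p : Bool → ℝ) (q : Bool → X → ℝ) (r : Bool → X → Y → ℝ),
      -- (p, q, r) is a parameterization of the bow graph
      (∑ u, p u = 1) ∧ (∀ u, ∑ x, q u x = 1) ∧ (∀ u x, ∑ y, r u x y = 1) ∧
      -- it induces the observational distribution Pr*
      (∀ x y, ∑ u, p u * q u x * r u x y = Pstar x y) ∧
      -- (i) all parameters are strictly positive
      (∀ u, 0 < p u) ∧ (∀ u x, 0 < q u x) ∧ (∀ u x y, 0 < r u x y) ∧
      -- (ii) q(x | true) ≠ q(x | false) for every x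
      (∀ x, q true x ≠ q false x) := by
  classical
  have hXne : Nonempty X := Fintype.card_pos_iff.mp (by omega)
  have hYne : Nonempty Y := Fintype.card_pos_iff.mp (by omega)
  obtain ⟨a⟩ := hXne
  set n : ℝ := (Fintype.card X : ℝ) with hn
  have hn2 : (2:ℝ) ≤ n := by rw [hn]; exact_mod_cast hX
  set Px : X → ℝ := fun x => ∑ y, Pstar x y with hPx
  have hPxpos : ∀ x, 0 < Px x :=
    fun x => Finset.sum_pos (fun y _ => hpos x y) Finset.univ_nonempty
  have huniv : (Finset.univ : Finset X).Nonempty := ⟨a, Finset.mem_univ a⟩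
  set c : ℝ := Finset.univ.inf' huniv Px with hc
  have hcpos : 0 < c := (Finset.lt_inf'_iff huniv).mpr (fun x _ => hPxpos x)
  have hcle : ∀ x, c ≤ Px x := fun x => Finset.inf'_le Px (Finset.mem_univ x)
  set ε : ℝ := c / (2 * n) with hε
  have hεpos : 0 < ε := div_pos hcpos (by linarith)
  set t : X → ℝ := fun x => 1 - n * (if x = a then 1 else 0) with ht
  have htsum : ∑ x, t x = 0 := by
    simp only [ht]
    rw [Finset.sum_sub_distrib, ← Finset.mul_sum]
    simp [Finset.sum_ite_eq', hn]
  have htne : ∀ x, t x ≠ 0 := by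
    intro x
    by_cases hxa : x = a
    · subst hxa
      have hx : t x = 1 - n := by simp [ht]
      rw [hx]; intro h; linarith
    · have hx : t x = 1 := by simp [ht, hxa]
      rw [hx]; norm_num
  have htbound : ∀ x, ε * |t x| ≤ c / 2 := by
    intro x
    by_cases hxa : x = a
    · subst hxa
      have : |t x| = n - 1 := by
        have hx : t x = 1 - n := by simp [ht]
        rw [hx, abs_of_nonpos (by linarith)]; ring
      rw [this, hε]
      rw [div_mul_eq_mul_div, div_le_div_iff₀ (by linarith) (by norm_num)]
      nlinarith
    · have : |t x| = 1 := by simp [ht, hxa]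
      rw [this, hε, mul_one]
      rw [div_le_div_iff₀ (by linarith) (by norm_num)]
      nlinarith
  have hPxdef : ∀ x, ∑ y, Pstar x y = Px x := fun _ => rfl
  have hsum' : ∑ x, Px x = 1 := by simpa using hsum
  clear_value n Px c ε t
  refine ⟨fun _ => 1/2,
    fun u x => Px x + (if u then ε else -ε) * t x,
    fun _ x y => Pstar x y / Px x, ?_, ?_, ?_, ?_, ?_, ?_, ?_, ?_⟩
  · simp
  · intro u
    rw [Finset.sum_add_distrib, ← Finset.mul_sum, htsum, mul_zero, add_zero]
    exact hsum'
  · intro u x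
    rw [← Finset.sum_div, div_eq_one_iff_eq (hPxpos x).ne']
    exact hPxdef x
  · intro x y
    rw [Fintype.sum_bool]
    have hne := (hPxpos x).ne'
    field_simp
    simp only [if_true, if_false, Bool.false_eq_true]
    ring
  · intro u; norm_num
  · intro u x
    have h1 := htbound x
    have h2 := hcle x
    have habs : |ε * t x| ≤ c / 2 := by
      rw [abs_mul, abs_of_pos hεpos]; exact h1
    obtain ⟨hl, hr⟩ := abs_le.mp habs
    show 0 < Px x + (if u then ε else -ε) * t x
    cases u <;> norm_num <;> linarith
  · intro u x y
    exact div_pos (hpos x y) (hPxpos x)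
  · intro x
    intro h
    norm_num at h
    have hz : ε * t x = 0 := by linarith
    exact mul_ne_zero hεpos.ne' (htne x) hz
end

section
/- Let Y have at least two elements and let (p,q,r) be a parameterization of the bow graph all of whose parameters are strictly positive (p(u) > 0, q(x|u) > 0, r(y|u,x) > 0 for all u, x, y) and such that q(x₁|true) ≠ q(x₁|false) for a given x₁ ∈ X. Then for any y₁ ∈ Y there exists a conditional probability table r' (nonnegative, summing to 1 over y for each (u,x)) such that (p,q,r') induces the same observational distribution as (p,q,r), i.e. ∑_u p(u)q(x|u)r'(y|u,x) = ∑_u p(u)q(x|u)r(y|u,x) for all x, y, while the causal effects differ: ∑_u p(u)r'(y₁|u,x₁) ≠ ∑_u p(u)r(y₁|u,x₁) (perturbation construction in the proof of Proposition 2). -/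
/-- **Perturbation construction in the proof of Proposition 2.** Bow-graph model
(hidden binary confounder `U` of `X` and `Y`, edge `X → Y`). Given a
parameterization `(p, q, r)` with all parameters strictly positive and
`q(x₁ | true) ≠ q(x₁ | false)` for a given `x₁`, for any `y₁` (with `Y` having
at least two elements) there is a CPT `r'` such that `(p, q, r')` induces the
same observational distribution as `(p, q, r)` but the causal effects
`P_{x₁}(y₁)` differ. -/
theorem bow_graph_perturbation
    (X Y : Type*) [Fintype X] [Fintype Y]
    (hY : 2 ≤ Fintype.card Y)
    (p : Bool → ℝ) (q : Bool → X → ℝ) (r : Bool → X → Y → ℝ)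
    -- (p, q, r) is a parameterization of the bow graph
    (hps : ∑ u, p u = 1) (hqs : ∀ u, ∑ x, q u x = 1) (hrs : ∀ u x, ∑ y, r u x y = 1)
    -- all parameters are strictly positive
    (hp : ∀ u, 0 < p u) (hq : ∀ u x, 0 < q u x) (hr : ∀ u x y, 0 < r u x y)
    (x₁ : X)
    -- q(x₁ | true) ≠ q(x₁ | false)
    (hq₁ : q true x₁ ≠ q false x₁) :
    ∀ y₁ : Y, ∃ r' : Bool → X → Y → ℝ,
      -- r' is a conditional probability table
      (∀ u x y, 0 ≤ r' u x y) ∧ (∀ u x, ∑ y, r' u x y = 1) ∧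
      -- (p, q, r') induces the same observational distribution as (p, q, r)
      (∀ x y, ∑ u, p u * q u x * r' u x y = ∑ u, p u * q u x * r u x y) ∧
      -- but the causal effects differ
      (∑ u, p u * r' u x₁ y₁) ≠ (∑ u, p u * r u x₁ y₁) := by
  intro y₁
  classical
  obtain ⟨y₂, hy₂⟩ := Fintype.exists_ne_of_one_lt_card (by omega) y₁
  have hpsum : p true + p false = 1 := by
    simpa [Fintype.sum_bool] using hps
  have hple : ∀ u, p u ≤ 1 := by
    intro u; cases u
    · nlinarith [hp true]
    · nlinarith [hp false]
  have hqle : ∀ u, q u x₁ ≤ 1 := by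
    intro u
    have h := hqs u
    calc q u x₁ ≤ ∑ x, q u x :=
          Finset.single_le_sum (fun x _ => (hq u x).le) (Finset.mem_univ x₁)
      _ = 1 := h
  -- the perturbation size
  obtain ⟨t, htpos, ht1, ht2, ht3, ht4⟩ :
      ∃ t : ℝ, 0 < t ∧ t ≤ r true x₁ y₁ ∧ t ≤ r true x₁ y₂ ∧
        t ≤ r false x₁ y₁ ∧ t ≤ r false x₁ y₂ := by
    refine ⟨min (min (r true x₁ y₁) (r true x₁ y₂))
        (min (r false x₁ y₁) (r false x₁ y₂)), ?_, ?_, ?_, ?_, ?_⟩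
    · simp only [lt_min_iff]; exact ⟨⟨hr _ _ _, hr _ _ _⟩, ⟨hr _ _ _, hr _ _ _⟩⟩
    · exact le_trans (min_le_left _ _) (min_le_left _ _)
    · exact le_trans (min_le_left _ _) (min_le_right _ _)
    · exact le_trans (min_le_right _ _) (min_le_left _ _)
    · exact le_trans (min_le_right _ _) (min_le_right _ _)
  have hpq1t : p true * q true x₁ ≤ 1 := by
    nlinarith [hple true, hqle true, hp true, hq true x₁]
  have hpq1f : p false * q false x₁ ≤ 1 := by
    nlinarith [hple false, hqle false, hp false, hq false x₁]
  set εt : ℝ := t * (p false * q false x₁) with hεt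
  set εf : ℝ := -(t * (p true * q true x₁)) with hεf
  have hεt_bd : 0 ≤ εt ∧ εt ≤ t := by
    constructor
    · rw [hεt]
      exact mul_nonneg htpos.le (mul_nonneg (hp false).le (hq false x₁).le)
    · rw [hεt]; nlinarith [htpos, hpq1f]
  have hεf_bd : -t ≤ εf ∧ εf ≤ 0 := by
    constructor
    · rw [hεf]; nlinarith [htpos, hpq1t]
    · rw [hεf]
      have : 0 ≤ t * (p true * q true x₁) :=
        mul_nonneg htpos.le (mul_nonneg (hp true).le (hq true x₁).le)
      linarith
  set ε : Bool → ℝ := fun u => bif u then εt else εf with hε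
  have hεtrue : ε true = εt := rfl
  have hεfalse : ε false = εf := rfl
  have hεbd : ∀ u, -t ≤ ε u ∧ ε u ≤ t := by
    intro u; cases u
    · rw [hεfalse]; exact ⟨hεf_bd.1, le_trans hεf_bd.2 htpos.le⟩
    · rw [hεtrue]; exact ⟨le_trans (by linarith) hεt_bd.1, hεt_bd.2⟩
  set d : Bool → Y → ℝ := fun u y =>
    if y = y₁ then ε u else if y = y₂ then -ε u else 0 with hd
  have hd1 : ∀ u, d u y₁ = ε u := by
    intro u
    show (if y₁ = y₁ then ε u else if y₁ = y₂ then -ε u else 0) = ε u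
    rw [if_pos rfl]
  have hd2 : ∀ u, d u y₂ = -ε u := by
    intro u
    show (if y₂ = y₁ then ε u else if y₂ = y₂ then -ε u else 0) = -ε u
    rw [if_neg hy₂, if_pos rfl]
  have hd0 : ∀ u y, y ≠ y₁ → y ≠ y₂ → d u y = 0 := by
    intro u y h1 h2
    show (if y = y₁ then ε u else if y = y₂ then -ε u else 0) = 0
    rw [if_neg h1, if_neg h2]
  have hdsum : ∀ u, ∑ y, d u y = 0 := by
    intro u
    have heq : ∀ y : Y, d u y =
        (if y = y₁ then ε u else 0) + (if y = y₂ then -ε u else 0) := by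
      intro y
      by_cases h1 : y = y₁
      · rw [h1, hd1 u, if_pos rfl, if_neg (Ne.symm hy₂)]; ring
      · by_cases h2 : y = y₂
        · rw [h2, hd2 u, if_neg hy₂, if_pos rfl]; ring
        · rw [hd0 u y h1 h2, if_neg h1, if_neg h2]; ring
    rw [Finset.sum_congr rfl (fun y _ => heq y), Finset.sum_add_distrib]
    simp [Finset.sum_ite_eq']
  have hkey : p true * q true x₁ * ε true + p false * q false x₁ * ε false = 0 := by
    rw [hεtrue, hεfalse, hεt, hεf]; ring
  refine ⟨fun u x y => r u x y + (if x = x₁ then d u y else 0), ?_, ?_, ?_, ?_⟩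
  · -- nonnegativity
    intro u x y
    show 0 ≤ r u x y + (if x = x₁ then d u y else 0)
    by_cases hx : x = x₁
    · rw [hx, if_pos rfl]
      by_cases h1 : y = y₁
      · rw [h1, hd1 u]
        have h := (hεbd u).1
        have hrt : t ≤ r u x₁ y₁ := by cases u; exact ht3; exact ht1
        linarith
      · by_cases h2 : y = y₂
        · rw [h2, hd2 u]
          have h := (hεbd u).2
          have hrt : t ≤ r u x₁ y₂ := by cases u; exact ht4; exact ht2
          linarith
        · rw [hd0 u y h1 h2]
          have := (hr u x₁ y).le; linarith
    · rw [if_neg hx]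
      have := (hr u x y).le; linarith
  · -- sums to one
    intro u x
    show ∑ y, (r u x y + if x = x₁ then d u y else 0) = 1
    by_cases hx : x = x₁
    · rw [Finset.sum_congr rfl (fun y _ => by rw [if_pos hx]),
        Finset.sum_add_distrib, hrs, hdsum]
      ring
    · rw [Finset.sum_congr rfl (fun y _ => by rw [if_neg hx]),
        Finset.sum_add_distrib, hrs]
      simp
  · -- same observational distribution
    intro x y
    show ∑ u, p u * q u x * (r u x y + if x = x₁ then d u y else 0)
        = ∑ u, p u * q u x * r u x y
    by_cases hx : x = x₁
    · rw [Finset.sum_congr rfl (fun u _ => by rw [if_pos hx]), hx]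
      simp only [Fintype.sum_bool]
      have hz : p true * q true x₁ * d true y + p false * q false x₁ * d false y = 0 := by
        by_cases h1 : y = y₁
        · rw [h1, hd1, hd1]; exact hkey
        · by_cases h2 : y = y₂
          · rw [h2, hd2, hd2]; linear_combination -hkey
          · rw [hd0 true y h1 h2, hd0 false y h1 h2]; ring
      linear_combination hz
    · rw [Finset.sum_congr rfl (fun u _ => by rw [if_neg hx])]
      simp
  · -- different causal effects
    show (∑ u, p u * (r u x₁ y₁ + if x₁ = x₁ then d u y₁ else 0)) ≠ _
    rw [Finset.sum_congr rfl (fun u _ => by rw [if_pos rfl, hd1])]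
    simp only [Fintype.sum_bool]
    intro hcon
    have h0 : p true * ε true + p false * ε false = 0 := by linarith
    rw [hεtrue, hεfalse, hεt, hεf] at h0
    have h1 : t * (p true * p false) * (q false x₁ - q true x₁) = 0 := by
      linear_combination h0
    have hne : q false x₁ - q true x₁ ≠ 0 := sub_ne_zero.mpr (Ne.symm hq₁)
    exact (mul_ne_zero (mul_ne_zero (ne_of_gt htpos)
      (ne_of_gt (mul_pos (hp true) (hp false)))) hne) h1
end

section
/- If P(x,a) > 0 for all x ∈ X and a ∈ A, then the causal effect satisfies the front-door adjustment formula: P_x(y) = ∑_a P(a|x) · ∑_{x'} P(x') · P(y|x',a) for all x and y (identifying formula found by the invariant-cut for the graph of Fig. 5(a)). -/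
/-- **Front-door adjustment (Fig. 5(a)).** Front-door model: hidden `U` is a
parent of `X` and `Y`, `X` is a parent of `A`, `A` is a parent of `Y`. If
`P(x, a) > 0` for all `x` and `a`, then the causal effect satisfies the
front-door adjustment formula
`P_x(y) = ∑ a, P(a | x) * ∑ x', P(x') * P(y | x', a)`. -/
theorem front_door_adjustment
    {U X A Y : Type*} [Fintype U] [Nonempty U] [Fintype X] [Fintype A] [Fintype Y]
    (θU : U → ℝ) (θX : X → U → ℝ) (θA : A → X → ℝ) (θY : Y → U → A → ℝ)
    (hθU : ∀ u, 0 ≤ θU u) (hθUs : ∑ u, θU u = 1)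
    (hθX : ∀ x u, 0 ≤ θX x u) (hθXs : ∀ u, ∑ x, θX x u = 1)
    (hθA : ∀ a x, 0 ≤ θA a x) (hθAs : ∀ x, ∑ a, θA a x = 1)
    (hθY : ∀ y u a, 0 ≤ θY y u a) (hθYs : ∀ u a, ∑ y, θY y u a = 1)
    -- observational joint distribution
    (P : X → A → Y → ℝ)
    (hP : ∀ x a y, P x a y = ∑ u, θU u * θX x u * θA a x * θY y u a)
    -- positivity: P(x, a) > 0 for all x and a
    (hpos : ∀ x a, 0 < ∑ y, P x a y) :
    ∀ x y,
      -- causal effect P_x(y)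
      (∑ a, θA a x * ∑ u, θU u * θY y u a)
      =
      -- ∑ a, P(a | x) * ∑ x', P(x') * P(y | x', a)
      ∑ a, ((∑ y', P x a y') / (∑ a', ∑ y', P x a' y'))
          * ∑ x', (∑ a', ∑ y', P x' a' y') * (P x' a y / (∑ y', P x' a y')) := by
  -- Q x = P(x), the marginal of X
  set Q : X → ℝ := fun x => ∑ u, θU u * θX x u with hQ
  -- key: ∑ y, P x a y = θA a x * Q x
  have hPy : ∀ x a, (∑ y, P x a y) = θA a x * Q x := by
    intro x a
    simp only [hP]
    rw [Finset.sum_comm]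
    rw [Finset.mul_sum]
    refine Finset.sum_congr rfl fun u _ => ?_
    have : ∑ y, θU u * θX x u * θA a x * θY y u a
        = (θU u * θX x u * θA a x) * ∑ y, θY y u a := by
      rw [Finset.mul_sum]
    rw [this, hθYs u a]
    ring
  have hposQ : ∀ x, 0 < Q x := by
    intro x
    have ⟨a⟩ : Nonempty A := by
      by_contra h
      simp only [not_nonempty_iff] at h
      have := hθAs x
      simp [Finset.univ_eq_empty] at this
    have := hpos x a
    rw [hPy] at this
    rcases (mul_pos_iff.mp this) with ⟨_, h⟩ | ⟨h, _⟩
    · exact h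
    · exact absurd (hθA a x) (not_le.mpr h)
  have hposA : ∀ x a, 0 < θA a x := by
    intro x a
    have := hpos x a
    rw [hPy] at this
    rcases (mul_pos_iff.mp this) with ⟨h, _⟩ | ⟨_, h⟩
    · exact h
    · exact absurd (hposQ x) (not_lt.mpr h.le)
  have hPay : ∀ x' a y, P x' a y = θA a x' * ∑ u, θU u * θX x' u * θY y u a := by
    intro x' a y
    rw [hP]
    rw [Finset.mul_sum]
    exact Finset.sum_congr rfl fun u _ => by ring
  intro x y
  have hsum2 : (∑ a', ∑ y', P x a' y') = Q x := by
    simp only [hPy]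
    rw [← Finset.sum_mul, hθAs x, one_mul]
  refine Finset.sum_congr rfl fun a _ => ?_
  rw [hPy, hsum2, mul_div_assoc, div_self (hposQ x).ne', mul_one]
  congr 1
  have : ∀ x', (∑ a', ∑ y', P x' a' y') = Q x' := by
    intro x'
    simp only [hPy]
    rw [← Finset.sum_mul, hθAs x', one_mul]
  calc (∑ u, θU u * θY y u a)
      = ∑ u, (∑ x', θX x' u) * (θU u * θY y u a) := by
        simp only [hθXs, one_mul]
    _ = ∑ x', ∑ u, θU u * θX x' u * θY y u a := by
        rw [Finset.sum_comm]
        refine Finset.sum_congr rfl fun x' _ => ?_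
        rw [Finset.sum_mul]
        exact Finset.sum_congr rfl fun u _ => by ring
    _ = ∑ x', (∑ a', ∑ y', P x' a' y') * (P x' a y / (∑ y', P x' a y')) := by
        refine Finset.sum_congr rfl fun x' _ => ?_
        rw [this x', hPay, hPy, mul_div_mul_left _ _ (hposA x' a).ne',
          mul_comm, div_mul_cancel₀ _ (hposQ x').ne']
end

section
/- If P(x,a) > 0 for all x ∈ X and a ∈ A, then for all a and y, ∑_u θU(u)θY(y|u,a) = ∑_x P(x) · P(y|x,a); i.e., the c-factor of the c-component containing U and Y has a projection computable from the observational distribution. -/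
/-- **Projection of the c-factor of the c-component containing `U` and `Y`**
in the front-door model (Fig. 5(a)): hidden `U` is a parent of `X` and `Y`,
`X` is a parent of `A`, `A` is a parent of `Y`. If `P(x, a) > 0` for all `x`
and `a`, then for all `a` and `y`,
`∑ u, θU(u) θY(y | u, a) = ∑ x, P(x) * P(y | x, a)`. -/
theorem front_door_cfactor_projection
    {U X A Y : Type*} [Fintype U] [Nonempty U] [Fintype X] [Fintype A] [Fintype Y]
    (θU : U → ℝ) (θX : X → U → ℝ) (θA : A → X → ℝ) (θY : Y → U → A → ℝ)
    (hθU : ∀ u, 0 ≤ θU u) (hθUs : ∑ u, θU u = 1)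
    (hθX : ∀ x u, 0 ≤ θX x u) (hθXs : ∀ u, ∑ x, θX x u = 1)
    (hθA : ∀ a x, 0 ≤ θA a x) (hθAs : ∀ x, ∑ a, θA a x = 1)
    (hθY : ∀ y u a, 0 ≤ θY y u a) (hθYs : ∀ u a, ∑ y, θY y u a = 1)
    -- observational joint distribution
    (P : X → A → Y → ℝ)
    (hP : ∀ x a y, P x a y = ∑ u, θU u * θX x u * θA a x * θY y u a)
    -- positivity: P(x, a) > 0 for all x and a
    (hpos : ∀ x a, 0 < ∑ y, P x a y) :
    ∀ a y,
      (∑ u, θU u * θY y u a)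
      =
      -- ∑ x, P(x) * P(y | x, a)
      ∑ x, (∑ a', ∑ y', P x a' y') * (P x a y / (∑ y', P x a y')) := by
  intro a y
  set S : X → ℝ := fun x => ∑ u, θU u * θX x u with hS
  have hmarg : ∀ x a', (∑ y', P x a' y') = θA a' x * S x := by
    intro x a'
    simp only [hP]
    rw [Finset.sum_comm]
    have h1 : ∀ u, ∑ y', θU u * θX x u * θA a' x * θY y' u a' = θU u * θX x u * θA a' x := by
      intro u
      rw [← Finset.mul_sum, hθYs]; ring
    simp only [h1]
    rw [hS, Finset.mul_sum]
    exact Finset.sum_congr rfl fun u _ => by ring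
  have hSpos : ∀ x, 0 < S x := by
    intro x
    have := hpos x a
    rw [hmarg] at this
    by_contra h
    push_neg at h
    have hS0 : 0 ≤ S x := Finset.sum_nonneg fun u _ => mul_nonneg (hθU u) (hθX x u)
    nlinarith [hθA a x]
  have hApos : ∀ x, 0 < θA a x := by
    intro x
    have := hpos x a
    rw [hmarg] at this
    rcases lt_or_ge 0 (θA a x) with h | h
    · exact h
    · exfalso; nlinarith [hSpos x]
  have hPx : ∀ x, (∑ a', ∑ y', P x a' y') = S x := by
    intro x
    simp only [hmarg, ← Finset.sum_mul, hθAs, one_mul]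
  have hPxa : ∀ x, P x a y = θA a x * ∑ u, θU u * θX x u * θY y u a := by
    intro x
    rw [hP, Finset.mul_sum]
    exact Finset.sum_congr rfl fun u _ => by ring
  have key : ∀ x, (∑ a', ∑ y', P x a' y') * (P x a y / (∑ y', P x a y')) =
      ∑ u, θU u * θX x u * θY y u a := by
    intro x
    rw [hPx, hPxa, hmarg, mul_div_mul_left _ _ (hApos x).ne',
      mul_div_cancel₀ _ (hSpos x).ne']
  simp only [key]
  rw [Finset.sum_comm]
  refine Finset.sum_congr rfl fun u _ => ?_
  calc θU u * θY y u a = (θU u * θY y u a) * ∑ x, θX x u := by rw [hθXs, mul_one]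
    _ = ∑ x, θU u * θX x u * θY y u a := by
        rw [Finset.mul_sum]; exact Finset.sum_congr rfl fun x _ => by ring
end

section
/- Assume the observational joint distribution P is strictly positive. Then for all v₁, v₂, v₃, v₄, v₅: ∑_{u₁,u₃} p₁(u₁)p₃(u₃)θ₁(v₁|u₁,u₃)θ₃(v₃|u₁,v₂)θ₅(v₅|u₃,v₄) = P(v₁) · P(v₃|v₁,v₂) · P(v₅|v₁,v₂,v₃,v₄); i.e., the c-factor Q[S₁] of the c-component on {V₁, V₃, V₅} is identified from P. -/
/-- Factoring a triple sum where one factor depends only on the middle index. -/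
lemma factor_mid {U1 U2 U3 : Type*} [Fintype U1] [Fintype U2] [Fintype U3]
    (F : U1 → U3 → ℝ) (G : U2 → ℝ) :
    ∑ u1, ∑ u2, ∑ u3, F u1 u3 * G u2
      = (∑ u2, G u2) * (∑ u1, ∑ u3, F u1 u3) := by
  rw [Finset.mul_sum]
  refine Finset.sum_congr rfl fun u1 _ => ?_
  rw [Finset.sum_mul_sum]
  refine Finset.sum_congr rfl fun u2 _ => ?_
  exact Finset.sum_congr rfl fun u3 _ => (mul_comm _ _)

/-- **Identification of the c-factor `Q[S₁]` of the c-component on `{V₁, V₃, V₅}`**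
for the causal graph of Fig. 4(a) (from Tian and Pearl). Assuming the
observational joint distribution `P` is strictly positive,
`∑ u₁ u₃, p₁(u₁) p₃(u₃) θ₁(v₁|u₁,u₃) θ₃(v₃|u₁,v₂) θ₅(v₅|u₃,v₄)
  = P(v₁) * P(v₃ | v₁, v₂) * P(v₅ | v₁, v₂, v₃, v₄)`. -/
theorem tian_pearl_cfactor_S1
    {U1 U2 U3 V1 V2 V3 V4 V5 : Type*}
    [Fintype U1] [Fintype U2] [Fintype U3]
    [Nonempty U1] [Nonempty U2] [Nonempty U3]
    [Fintype V1] [Fintype V2] [Fintype V3] [Fintype V4] [Fintype V5]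
    (p1 : U1 → ℝ) (p2 : U2 → ℝ) (p3 : U3 → ℝ)
    (θ1 : V1 → U1 → U3 → ℝ) (θ2 : V2 → U2 → V1 → ℝ) (θ3 : V3 → U1 → V2 → ℝ)
    (θ4 : V4 → U2 → V3 → ℝ) (θ5 : V5 → U3 → V4 → ℝ)
    (hp1 : ∀ u, 0 ≤ p1 u) (hp1s : ∑ u, p1 u = 1)
    (hp2 : ∀ u, 0 ≤ p2 u) (hp2s : ∑ u, p2 u = 1)
    (hp3 : ∀ u, 0 ≤ p3 u) (hp3s : ∑ u, p3 u = 1)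
    (hθ1 : ∀ v1 u1 u3, 0 ≤ θ1 v1 u1 u3) (hθ1s : ∀ u1 u3, ∑ v1, θ1 v1 u1 u3 = 1)
    (hθ2 : ∀ v2 u2 v1, 0 ≤ θ2 v2 u2 v1) (hθ2s : ∀ u2 v1, ∑ v2, θ2 v2 u2 v1 = 1)
    (hθ3 : ∀ v3 u1 v2, 0 ≤ θ3 v3 u1 v2) (hθ3s : ∀ u1 v2, ∑ v3, θ3 v3 u1 v2 = 1)
    (hθ4 : ∀ v4 u2 v3, 0 ≤ θ4 v4 u2 v3) (hθ4s : ∀ u2 v3, ∑ v4, θ4 v4 u2 v3 = 1)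
    (hθ5 : ∀ v5 u3 v4, 0 ≤ θ5 v5 u3 v4) (hθ5s : ∀ u3 v4, ∑ v5, θ5 v5 u3 v4 = 1)
    -- observational joint distribution
    (P : V1 → V2 → V3 → V4 → V5 → ℝ)
    (hP : ∀ v1 v2 v3 v4 v5, P v1 v2 v3 v4 v5 =
      ∑ u1, ∑ u2, ∑ u3, p1 u1 * p2 u2 * p3 u3 *
        θ1 v1 u1 u3 * θ2 v2 u2 v1 * θ3 v3 u1 v2 * θ4 v4 u2 v3 * θ5 v5 u3 v4)
    -- strict positivity of P
    (hpos : ∀ v1 v2 v3 v4 v5, 0 < P v1 v2 v3 v4 v5) :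
    ∀ v1 v2 v3 v4 v5,
      (∑ u1, ∑ u3, p1 u1 * p3 u3 * θ1 v1 u1 u3 * θ3 v3 u1 v2 * θ5 v5 u3 v4)
      =
      -- P(v₁)
      (∑ v2', ∑ v3', ∑ v4', ∑ v5', P v1 v2' v3' v4' v5')
      -- P(v₃ | v₁, v₂)
      * ((∑ v4', ∑ v5', P v1 v2 v3 v4' v5') / (∑ v3', ∑ v4', ∑ v5', P v1 v2 v3' v4' v5'))
      -- P(v₅ | v₁, v₂, v₃, v₄)
      * (P v1 v2 v3 v4 v5 / (∑ v5', P v1 v2 v3 v4 v5')) := by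
  intro v1 v2 v3 v4 v5
  -- P itself factors as g24 * Q135
  have hPeq : ∀ w2 w3 w4 w5, P v1 w2 w3 w4 w5
      = (∑ u2, p2 u2 * θ2 w2 u2 v1 * θ4 w4 u2 w3)
        * (∑ u1, ∑ u3, p1 u1 * p3 u3 * θ1 v1 u1 u3 * θ3 w3 u1 w2 * θ5 w5 u3 w4) := by
    intro w2 w3 w4 w5
    rw [hP, ← factor_mid (fun u1 u3 => p1 u1 * p3 u3 * θ1 v1 u1 u3 * θ3 w3 u1 w2 * θ5 w5 u3 w4)
        (fun u2 => p2 u2 * θ2 w2 u2 v1 * θ4 w4 u2 w3)]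
    refine Finset.sum_congr rfl fun u1 _ => Finset.sum_congr rfl fun u2 _ =>
      Finset.sum_congr rfl fun u3 _ => by ring
  -- summing over v5
  have hD : ∀ w2 w3 w4, (∑ v5', P v1 w2 w3 w4 v5')
      = (∑ u2, p2 u2 * θ2 w2 u2 v1 * θ4 w4 u2 w3)
        * (∑ u1, ∑ u3, p1 u1 * p3 u3 * θ1 v1 u1 u3 * θ3 w3 u1 w2) := by
    intro w2 w3 w4
    simp only [hPeq]
    rw [← Finset.mul_sum]
    congr 1
    rw [Finset.sum_comm]
    refine Finset.sum_congr rfl fun u1 _ => ?_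
    rw [Finset.sum_comm]
    refine Finset.sum_congr rfl fun u3 _ => ?_
    rw [← Finset.mul_sum, hθ5s, mul_one]
  -- summing over v4, v5
  have hB : ∀ w2 w3, (∑ v4', ∑ v5', P v1 w2 w3 v4' v5')
      = (∑ u2, p2 u2 * θ2 w2 u2 v1)
        * (∑ u1, ∑ u3, p1 u1 * p3 u3 * θ1 v1 u1 u3 * θ3 w3 u1 w2) := by
    intro w2 w3
    simp only [hD]
    rw [← Finset.sum_mul]
    congr 1
    rw [Finset.sum_comm]
    refine Finset.sum_congr rfl fun u2 _ => ?_
    rw [← Finset.mul_sum, hθ4s, mul_one]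
  -- summing over v3, v4, v5
  have hC : ∀ w2, (∑ v3', ∑ v4', ∑ v5', P v1 w2 v3' v4' v5')
      = (∑ u2, p2 u2 * θ2 w2 u2 v1)
        * (∑ u1, ∑ u3, p1 u1 * p3 u3 * θ1 v1 u1 u3) := by
    intro w2
    simp only [hB]
    rw [← Finset.mul_sum]
    congr 1
    rw [Finset.sum_comm]
    refine Finset.sum_congr rfl fun u1 _ => ?_
    rw [Finset.sum_comm]
    refine Finset.sum_congr rfl fun u3 _ => ?_
    rw [← Finset.mul_sum, hθ3s, mul_one]
  -- summing over v2, v3, v4, v5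
  have hA : (∑ v2', ∑ v3', ∑ v4', ∑ v5', P v1 v2' v3' v4' v5')
      = (∑ u1, ∑ u3, p1 u1 * p3 u3 * θ1 v1 u1 u3) := by
    simp only [hC]
    rw [← Finset.sum_mul]
    have : (∑ v2', ∑ u2, p2 u2 * θ2 v2' u2 v1) = 1 := by
      rw [Finset.sum_comm]
      calc (∑ u2, ∑ v2', p2 u2 * θ2 v2' u2 v1) = ∑ u2, p2 u2 := by
            refine Finset.sum_congr rfl fun u2 _ => ?_
            rw [← Finset.mul_sum, hθ2s, mul_one]
        _ = 1 := hp2s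
    rw [this, one_mul]
  -- positivity / nonvanishing facts
  have hApos : 0 < (∑ u1, ∑ u3, p1 u1 * p3 u3 * θ1 v1 u1 u3) := by
    rw [← hA]
    refine Finset.sum_pos (fun _ _ => Finset.sum_pos (fun _ _ => Finset.sum_pos
      (fun _ _ => Finset.sum_pos (fun _ _ => hpos _ _ _ _ _) ⟨v5, Finset.mem_univ v5⟩)
      ⟨v4, Finset.mem_univ v4⟩) ⟨v3, Finset.mem_univ v3⟩) ⟨v2, Finset.mem_univ v2⟩
  have hCpos : 0 < (∑ v3', ∑ v4', ∑ v5', P v1 v2 v3' v4' v5') := by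
    refine Finset.sum_pos (fun _ _ => Finset.sum_pos (fun _ _ => Finset.sum_pos
      (fun _ _ => hpos _ _ _ _ _) ⟨v5, Finset.mem_univ v5⟩) ⟨v4, Finset.mem_univ v4⟩)
      ⟨v3, Finset.mem_univ v3⟩
  have hDpos : 0 < (∑ v5', P v1 v2 v3 v4 v5') :=
    Finset.sum_pos (fun _ _ => hpos _ _ _ _ _) ⟨v5, Finset.mem_univ v5⟩
  have hg2 : (∑ u2, p2 u2 * θ2 v2 u2 v1) ≠ 0 := by
    intro h
    rw [hC v2, h, zero_mul] at hCpos
    exact lt_irrefl _ hCpos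
  have hg24 : (∑ u2, p2 u2 * θ2 v2 u2 v1 * θ4 v4 u2 v3) ≠ 0 := by
    intro h
    rw [hD v2 v3 v4, h, zero_mul] at hDpos
    exact lt_irrefl _ hDpos
  have hQ13 : (∑ u1, ∑ u3, p1 u1 * p3 u3 * θ1 v1 u1 u3 * θ3 v3 u1 v2) ≠ 0 := by
    intro h
    rw [hD v2 v3 v4, h, mul_zero] at hDpos
    exact lt_irrefl _ hDpos
  -- final cancellation
  rw [hA, hB v2 v3, hC v2, hD v2 v3 v4, hPeq v2 v3 v4 v5]
  field_simp
end

section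
/- Assume the observational joint distribution P is strictly positive. Then for all v₁, v₂, v₃, v₄: ∑_{u₂} p₂(u₂)θ₂(v₂|u₂,v₁)θ₄(v₄|u₂,v₃) = P(v₂|v₁) · P(v₄|v₁,v₂,v₃); i.e., the c-factor Q[S₄] of the c-component on {V₂, V₄} is identified from P. -/
/-- **Identification of the c-factor `Q[S₄]` of the c-component on `{V₂, V₄}`**
for the causal graph of Fig. 4(a) (from Tian and Pearl). Assuming the
observational joint distribution `P` is strictly positive,
`∑ u₂, p₂(u₂) θ₂(v₂|u₂,v₁) θ₄(v₄|u₂,v₃) = P(v₂ | v₁) * P(v₄ | v₁, v₂, v₃)`. -/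
theorem tian_pearl_cfactor_S4
    {U1 U2 U3 V1 V2 V3 V4 V5 : Type*}
    [Fintype U1] [Fintype U2] [Fintype U3]
    [Nonempty U1] [Nonempty U2] [Nonempty U3]
    [Fintype V1] [Fintype V2] [Fintype V3] [Fintype V4] [Fintype V5]
    (p1 : U1 → ℝ) (p2 : U2 → ℝ) (p3 : U3 → ℝ)
    (θ1 : V1 → U1 → U3 → ℝ) (θ2 : V2 → U2 → V1 → ℝ) (θ3 : V3 → U1 → V2 → ℝ)
    (θ4 : V4 → U2 → V3 → ℝ) (θ5 : V5 → U3 → V4 → ℝ)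
    (hp1 : ∀ u, 0 ≤ p1 u) (hp1s : ∑ u, p1 u = 1)
    (hp2 : ∀ u, 0 ≤ p2 u) (hp2s : ∑ u, p2 u = 1)
    (hp3 : ∀ u, 0 ≤ p3 u) (hp3s : ∑ u, p3 u = 1)
    (hθ1 : ∀ v1 u1 u3, 0 ≤ θ1 v1 u1 u3) (hθ1s : ∀ u1 u3, ∑ v1, θ1 v1 u1 u3 = 1)
    (hθ2 : ∀ v2 u2 v1, 0 ≤ θ2 v2 u2 v1) (hθ2s : ∀ u2 v1, ∑ v2, θ2 v2 u2 v1 = 1)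
    (hθ3 : ∀ v3 u1 v2, 0 ≤ θ3 v3 u1 v2) (hθ3s : ∀ u1 v2, ∑ v3, θ3 v3 u1 v2 = 1)
    (hθ4 : ∀ v4 u2 v3, 0 ≤ θ4 v4 u2 v3) (hθ4s : ∀ u2 v3, ∑ v4, θ4 v4 u2 v3 = 1)
    (hθ5 : ∀ v5 u3 v4, 0 ≤ θ5 v5 u3 v4) (hθ5s : ∀ u3 v4, ∑ v5, θ5 v5 u3 v4 = 1)
    -- observational joint distribution
    (P : V1 → V2 → V3 → V4 → V5 → ℝ)
    (hP : ∀ v1 v2 v3 v4 v5, P v1 v2 v3 v4 v5 =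
      ∑ u1, ∑ u2, ∑ u3, p1 u1 * p2 u2 * p3 u3 *
        θ1 v1 u1 u3 * θ2 v2 u2 v1 * θ3 v3 u1 v2 * θ4 v4 u2 v3 * θ5 v5 u3 v4)
    -- strict positivity of P
    (hpos : ∀ v1 v2 v3 v4 v5, 0 < P v1 v2 v3 v4 v5) :
    ∀ v1 v2 v3 v4,
      (∑ u2, p2 u2 * θ2 v2 u2 v1 * θ4 v4 u2 v3)
      =
      -- P(v₂ | v₁)
      ((∑ v3', ∑ v4', ∑ v5', P v1 v2 v3' v4' v5')
        / (∑ v2', ∑ v3', ∑ v4', ∑ v5', P v1 v2' v3' v4' v5'))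
      -- P(v₄ | v₁, v₂, v₃)
      * ((∑ v5', P v1 v2 v3 v4 v5') / (∑ v4', ∑ v5', P v1 v2 v3 v4' v5')) := by
  intro v1 v2 v3 v4
  -- V5 is nonempty (else θ5 can't be a probability table)
  haveI : Nonempty V2 := ⟨v2⟩
  haveI : Nonempty V3 := ⟨v3⟩
  haveI : Nonempty V4 := ⟨v4⟩
  haveI hV5 : Nonempty V5 := by
    rcases isEmpty_or_nonempty V5 with h | h
    · exfalso
      have := hθ5s (Classical.arbitrary U3) v4
      simp at this
    · exact h
  -- product factorization lemma
  have key : ∀ (f : U1 → U3 → ℝ) (g : U2 → ℝ),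
      (∑ u1, ∑ u2, ∑ u3, f u1 u3 * g u2)
        = (∑ u1, ∑ u3, f u1 u3) * (∑ u2, g u2) := by
    intro f g
    rw [Finset.sum_mul]
    exact Finset.sum_congr rfl fun u1 _ => by
      simp only [← Finset.sum_mul, ← Finset.mul_sum]
  set A : ℝ := ∑ u1, ∑ u3, p1 u1 * p3 u3 * θ1 v1 u1 u3 with hA
  set B : ℝ := ∑ u2, p2 u2 * θ2 v2 u2 v1 with hB
  set E : ℝ := ∑ u1, ∑ u3, p1 u1 * p3 u3 * θ1 v1 u1 u3 * θ3 v3 u1 v2 with hE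
  set Q : ℝ := ∑ u2, p2 u2 * θ2 v2 u2 v1 * θ4 v4 u2 v3 with hQ
  -- marginal over v5
  have m5 : ∀ v2' v3' v4', (∑ v5', P v1 v2' v3' v4' v5')
      = ∑ u1, ∑ u2, ∑ u3, p1 u1 * p2 u2 * p3 u3 *
          θ1 v1 u1 u3 * θ2 v2' u2 v1 * θ3 v3' u1 v2' * θ4 v4' u2 v3' := by
    intro v2' v3' v4'
    simp only [hP]
    rw [Finset.sum_comm]
    refine Finset.sum_congr rfl fun u1 _ => ?_
    rw [Finset.sum_comm]
    refine Finset.sum_congr rfl fun u2 _ => ?_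
    rw [Finset.sum_comm]
    refine Finset.sum_congr rfl fun u3 _ => ?_
    rw [← Finset.mul_sum, hθ5s, mul_one]
  -- marginal over v4, v5
  have m45 : ∀ v2' v3', (∑ v4', ∑ v5', P v1 v2' v3' v4' v5')
      = ∑ u1, ∑ u2, ∑ u3, p1 u1 * p2 u2 * p3 u3 *
          θ1 v1 u1 u3 * θ2 v2' u2 v1 * θ3 v3' u1 v2' := by
    intro v2' v3'
    simp only [m5]
    rw [Finset.sum_comm]
    refine Finset.sum_congr rfl fun u1 _ => ?_
    rw [Finset.sum_comm]
    refine Finset.sum_congr rfl fun u2 _ => ?_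
    rw [Finset.sum_comm]
    refine Finset.sum_congr rfl fun u3 _ => ?_
    rw [← Finset.mul_sum, hθ4s, mul_one]
  -- marginal over v3, v4, v5
  have m345 : ∀ v2', (∑ v3', ∑ v4', ∑ v5', P v1 v2' v3' v4' v5')
      = ∑ u1, ∑ u2, ∑ u3, p1 u1 * p2 u2 * p3 u3 * θ1 v1 u1 u3 * θ2 v2' u2 v1 := by
    intro v2'
    simp only [m45]
    rw [Finset.sum_comm]
    refine Finset.sum_congr rfl fun u1 _ => ?_
    rw [Finset.sum_comm]
    refine Finset.sum_congr rfl fun u2 _ => ?_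
    rw [Finset.sum_comm]
    refine Finset.sum_congr rfl fun u3 _ => ?_
    rw [← Finset.mul_sum, hθ3s, mul_one]
  -- numerator of P(v2|v1): A * B
  have h1 : (∑ v3', ∑ v4', ∑ v5', P v1 v2 v3' v4' v5') = A * B := by
    rw [m345]
    rw [show (∑ u1, ∑ u2, ∑ u3, p1 u1 * p2 u2 * p3 u3 * θ1 v1 u1 u3 * θ2 v2 u2 v1)
        = ∑ u1, ∑ u2, ∑ u3, (p1 u1 * p3 u3 * θ1 v1 u1 u3) * (p2 u2 * θ2 v2 u2 v1)
      from Finset.sum_congr rfl fun u1 _ => Finset.sum_congr rfl fun u2 _ =>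
        Finset.sum_congr rfl fun u3 _ => by ring]
    exact key _ _
  -- denominator of P(v2|v1): A
  have h0 : (∑ v2', ∑ v3', ∑ v4', ∑ v5', P v1 v2' v3' v4' v5') = A := by
    have : ∀ v2', (∑ v3', ∑ v4', ∑ v5', P v1 v2' v3' v4' v5')
        = A * (∑ u2, p2 u2 * θ2 v2' u2 v1) := by
      intro v2'
      rw [m345]
      rw [show (∑ u1, ∑ u2, ∑ u3, p1 u1 * p2 u2 * p3 u3 * θ1 v1 u1 u3 * θ2 v2' u2 v1)
          = ∑ u1, ∑ u2, ∑ u3, (p1 u1 * p3 u3 * θ1 v1 u1 u3) * (p2 u2 * θ2 v2' u2 v1)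
        from Finset.sum_congr rfl fun u1 _ => Finset.sum_congr rfl fun u2 _ =>
          Finset.sum_congr rfl fun u3 _ => by ring]
      exact key _ _
    simp only [this]
    rw [← Finset.mul_sum]
    have h0' : (∑ v2', ∑ u2, p2 u2 * θ2 v2' u2 v1) = 1 := by
      rw [Finset.sum_comm]
      simp only [← Finset.mul_sum, hθ2s, mul_one]
      exact hp2s
    rw [h0', mul_one]
  -- numerator of P(v4|v1,v2,v3): E * Q
  have h2 : (∑ v5', P v1 v2 v3 v4 v5') = E * Q := by
    rw [m5]
    rw [show (∑ u1, ∑ u2, ∑ u3, p1 u1 * p2 u2 * p3 u3 *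
          θ1 v1 u1 u3 * θ2 v2 u2 v1 * θ3 v3 u1 v2 * θ4 v4 u2 v3)
        = ∑ u1, ∑ u2, ∑ u3, (p1 u1 * p3 u3 * θ1 v1 u1 u3 * θ3 v3 u1 v2)
            * (p2 u2 * θ2 v2 u2 v1 * θ4 v4 u2 v3)
      from Finset.sum_congr rfl fun u1 _ => Finset.sum_congr rfl fun u2 _ =>
        Finset.sum_congr rfl fun u3 _ => by ring]
    exact key _ _
  -- denominator of P(v4|v1,v2,v3): E * B
  have h3 : (∑ v4', ∑ v5', P v1 v2 v3 v4' v5') = E * B := by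
    have : ∀ v4', (∑ v5', P v1 v2 v3 v4' v5')
        = E * (∑ u2, p2 u2 * θ2 v2 u2 v1 * θ4 v4' u2 v3) := by
      intro v4'
      rw [m5]
      rw [show (∑ u1, ∑ u2, ∑ u3, p1 u1 * p2 u2 * p3 u3 *
            θ1 v1 u1 u3 * θ2 v2 u2 v1 * θ3 v3 u1 v2 * θ4 v4' u2 v3)
          = ∑ u1, ∑ u2, ∑ u3, (p1 u1 * p3 u3 * θ1 v1 u1 u3 * θ3 v3 u1 v2)
              * (p2 u2 * θ2 v2 u2 v1 * θ4 v4' u2 v3)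
        from Finset.sum_congr rfl fun u1 _ => Finset.sum_congr rfl fun u2 _ =>
          Finset.sum_congr rfl fun u3 _ => by ring]
      exact key _ _
    simp only [this, ← Finset.mul_sum]
    congr 1
    rw [Finset.sum_comm]
    refine Finset.sum_congr rfl fun u2 _ => ?_
    rw [show (∑ v4', p2 u2 * θ2 v2 u2 v1 * θ4 v4' u2 v3)
        = (p2 u2 * θ2 v2 u2 v1) * ∑ v4', θ4 v4' u2 v3 from by rw [Finset.mul_sum]]
    rw [hθ4s, mul_one]
  -- positivity facts
  have hApos : (0 : ℝ) < A := by
    rw [← h0]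
    refine Finset.sum_pos (fun v2' _ => ?_) Finset.univ_nonempty
    refine Finset.sum_pos (fun v3' _ => ?_) Finset.univ_nonempty
    refine Finset.sum_pos (fun v4' _ => ?_) Finset.univ_nonempty
    exact Finset.sum_pos (fun v5' _ => hpos _ _ _ _ _) Finset.univ_nonempty
  have hEBpos : (0 : ℝ) < E * B := by
    rw [← h3]
    refine Finset.sum_pos (fun v4' _ => ?_) Finset.univ_nonempty
    exact Finset.sum_pos (fun v5' _ => hpos _ _ _ _ _) Finset.univ_nonempty
  have hAne : A ≠ 0 := ne_of_gt hApos
  have hEne : E ≠ 0 := left_ne_zero_of_mul (ne_of_gt hEBpos)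
  have hBne : B ≠ 0 := right_ne_zero_of_mul (ne_of_gt hEBpos)
  rw [h0, h1, h2, h3]
  field_simp
end

section
/- Assume the observational joint distribution P is strictly positive. Then for all v₂ and v₃: ∑_{u₁} p₁(u₁)θ₃(v₃|u₁,v₂) = ∑_{v₁} P(v₁) · P(v₃|v₁,v₂); i.e., the c-factor Q[S₃] is identified from P. -/
/-- **Identification of the c-factor `Q[S₃]`** for the causal graph of
Fig. 4(a) (from Tian and Pearl). Assuming the observational joint distribution
`P` is strictly positive,
`∑ u₁, p₁(u₁) θ₃(v₃|u₁,v₂) = ∑ v₁, P(v₁) * P(v₃ | v₁, v₂)`. -/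
theorem tian_pearl_cfactor_S3
    {U1 U2 U3 V1 V2 V3 V4 V5 : Type*}
    [Fintype U1] [Fintype U2] [Fintype U3]
    [Nonempty U1] [Nonempty U2] [Nonempty U3]
    [Fintype V1] [Fintype V2] [Fintype V3] [Fintype V4] [Fintype V5]
    (p1 : U1 → ℝ) (p2 : U2 → ℝ) (p3 : U3 → ℝ)
    (θ1 : V1 → U1 → U3 → ℝ) (θ2 : V2 → U2 → V1 → ℝ) (θ3 : V3 → U1 → V2 → ℝ)
    (θ4 : V4 → U2 → V3 → ℝ) (θ5 : V5 → U3 → V4 → ℝ)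
    (hp1 : ∀ u, 0 ≤ p1 u) (hp1s : ∑ u, p1 u = 1)
    (hp2 : ∀ u, 0 ≤ p2 u) (hp2s : ∑ u, p2 u = 1)
    (hp3 : ∀ u, 0 ≤ p3 u) (hp3s : ∑ u, p3 u = 1)
    (hθ1 : ∀ v1 u1 u3, 0 ≤ θ1 v1 u1 u3) (hθ1s : ∀ u1 u3, ∑ v1, θ1 v1 u1 u3 = 1)
    (hθ2 : ∀ v2 u2 v1, 0 ≤ θ2 v2 u2 v1) (hθ2s : ∀ u2 v1, ∑ v2, θ2 v2 u2 v1 = 1)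
    (hθ3 : ∀ v3 u1 v2, 0 ≤ θ3 v3 u1 v2) (hθ3s : ∀ u1 v2, ∑ v3, θ3 v3 u1 v2 = 1)
    (hθ4 : ∀ v4 u2 v3, 0 ≤ θ4 v4 u2 v3) (hθ4s : ∀ u2 v3, ∑ v4, θ4 v4 u2 v3 = 1)
    (hθ5 : ∀ v5 u3 v4, 0 ≤ θ5 v5 u3 v4) (hθ5s : ∀ u3 v4, ∑ v5, θ5 v5 u3 v4 = 1)
    -- observational joint distribution
    (P : V1 → V2 → V3 → V4 → V5 → ℝ)
    (hP : ∀ v1 v2 v3 v4 v5, P v1 v2 v3 v4 v5 =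
      ∑ u1, ∑ u2, ∑ u3, p1 u1 * p2 u2 * p3 u3 *
        θ1 v1 u1 u3 * θ2 v2 u2 v1 * θ3 v3 u1 v2 * θ4 v4 u2 v3 * θ5 v5 u3 v4)
    -- strict positivity of P
    (hpos : ∀ v1 v2 v3 v4 v5, 0 < P v1 v2 v3 v4 v5) :
    ∀ v2 v3,
      (∑ u1, p1 u1 * θ3 v3 u1 v2)
      =
      -- ∑ v₁, P(v₁) * P(v₃ | v₁, v₂)
      ∑ v1, (∑ v2', ∑ v3', ∑ v4', ∑ v5', P v1 v2' v3' v4' v5')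
        * ((∑ v4', ∑ v5', P v1 v2 v3 v4' v5')
            / (∑ v3', ∑ v4', ∑ v5', P v1 v2 v3' v4' v5')) := by

  intro v2 v3
  haveI hV4 : Nonempty V4 := by
    by_contra h
    rw [not_nonempty_iff] at h
    have h1 := hθ4s (Classical.arbitrary U2) v3
    simp at h1
  haveI hV5 : Nonempty V5 := by
    by_contra h
    rw [not_nonempty_iff] at h
    have h1 := hθ5s (Classical.arbitrary U3) (Classical.arbitrary V4)
    simp at h1
  haveI hV3 : Nonempty V3 := ⟨v3⟩
  -- marginalization lemmas
  have h5 : ∀ (v1 : V1) (v2 : V2) (v3 : V3) (v4 : V4), (∑ v5, P v1 v2 v3 v4 v5)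
      = ∑ u1, ∑ u2, ∑ u3, p1 u1 * p2 u2 * p3 u3 * θ1 v1 u1 u3 * θ2 v2 u2 v1
          * θ3 v3 u1 v2 * θ4 v4 u2 v3 := by
    intro v1 v2 v3 v4
    simp only [hP]
    rw [Finset.sum_comm]
    refine Finset.sum_congr rfl fun u1 _ => ?_
    rw [Finset.sum_comm]
    refine Finset.sum_congr rfl fun u2 _ => ?_
    rw [Finset.sum_comm]
    refine Finset.sum_congr rfl fun u3 _ => ?_
    rw [← Finset.mul_sum, hθ5s, mul_one]
  have h4 : ∀ (v1 : V1) (v2 : V2) (v3 : V3), (∑ v4, ∑ v5, P v1 v2 v3 v4 v5)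
      = ∑ u1, ∑ u2, ∑ u3, p1 u1 * p2 u2 * p3 u3 * θ1 v1 u1 u3 * θ2 v2 u2 v1
          * θ3 v3 u1 v2 := by
    intro v1 v2 v3
    simp only [h5]
    rw [Finset.sum_comm]
    refine Finset.sum_congr rfl fun u1 _ => ?_
    rw [Finset.sum_comm]
    refine Finset.sum_congr rfl fun u2 _ => ?_
    rw [Finset.sum_comm]
    refine Finset.sum_congr rfl fun u3 _ => ?_
    rw [← Finset.mul_sum, hθ4s, mul_one]
  have h3 : ∀ (v1 : V1) (v2 : V2), (∑ v3, ∑ v4, ∑ v5, P v1 v2 v3 v4 v5)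
      = ∑ u1, ∑ u2, ∑ u3, p1 u1 * p2 u2 * p3 u3 * θ1 v1 u1 u3 * θ2 v2 u2 v1 := by
    intro v1 v2
    simp only [h4]
    rw [Finset.sum_comm]
    refine Finset.sum_congr rfl fun u1 _ => ?_
    rw [Finset.sum_comm]
    refine Finset.sum_congr rfl fun u2 _ => ?_
    rw [Finset.sum_comm]
    refine Finset.sum_congr rfl fun u3 _ => ?_
    rw [← Finset.mul_sum, hθ3s, mul_one]
  have h2 : ∀ (v1 : V1), (∑ v2, ∑ v3, ∑ v4, ∑ v5, P v1 v2 v3 v4 v5)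
      = ∑ u1, ∑ u2, ∑ u3, p1 u1 * p2 u2 * p3 u3 * θ1 v1 u1 u3 := by
    intro v1
    simp only [h3]
    rw [Finset.sum_comm]
    refine Finset.sum_congr rfl fun u1 _ => ?_
    rw [Finset.sum_comm]
    refine Finset.sum_congr rfl fun u2 _ => ?_
    rw [Finset.sum_comm]
    refine Finset.sum_congr rfl fun u3 _ => ?_
    rw [← Finset.mul_sum, hθ2s, mul_one]
  -- factorizations
  have hNfac : ∀ v1 : V1,
      (∑ u1, ∑ u2, ∑ u3, p1 u1 * p2 u2 * p3 u3 * θ1 v1 u1 u3 * θ2 v2 u2 v1 * θ3 v3 u1 v2)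
      = (∑ u1, (p1 u1 * ∑ u3, p3 u3 * θ1 v1 u1 u3) * θ3 v3 u1 v2)
        * (∑ u2, p2 u2 * θ2 v2 u2 v1) := by
    intro v1
    rw [Finset.sum_mul_sum]
    refine Finset.sum_congr rfl fun u1 _ => ?_
    refine Finset.sum_congr rfl fun u2 _ => ?_
    simp only [Finset.mul_sum, Finset.sum_mul]
    refine Finset.sum_congr rfl fun u3 _ => ?_
    ring
  have hDfac : ∀ v1 : V1,
      (∑ u1, ∑ u2, ∑ u3, p1 u1 * p2 u2 * p3 u3 * θ1 v1 u1 u3 * θ2 v2 u2 v1)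
      = (∑ u1, p1 u1 * ∑ u3, p3 u3 * θ1 v1 u1 u3) * (∑ u2, p2 u2 * θ2 v2 u2 v1) := by
    intro v1
    rw [Finset.sum_mul_sum]
    refine Finset.sum_congr rfl fun u1 _ => ?_
    refine Finset.sum_congr rfl fun u2 _ => ?_
    simp only [Finset.mul_sum, Finset.sum_mul]
    refine Finset.sum_congr rfl fun u3 _ => ?_
    ring
  have hBfac : ∀ v1 : V1,
      (∑ u1, ∑ u2, ∑ u3, p1 u1 * p2 u2 * p3 u3 * θ1 v1 u1 u3)
      = ∑ u1, p1 u1 * ∑ u3, p3 u3 * θ1 v1 u1 u3 := by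
    intro v1
    refine Finset.sum_congr rfl fun u1 _ => ?_
    rw [show (p1 u1 * ∑ u3, p3 u3 * θ1 v1 u1 u3)
        = (∑ u2, p2 u2) * (p1 u1 * ∑ u3, p3 u3 * θ1 v1 u1 u3) by rw [hp2s, one_mul]]
    rw [Finset.sum_mul]
    refine Finset.sum_congr rfl fun u2 _ => ?_
    simp only [Finset.mul_sum]
    refine Finset.sum_congr rfl fun u3 _ => ?_
    ring
  have hM1 : ∀ v1 : V1, (∑ v2', ∑ v3', ∑ v4', ∑ v5', P v1 v2' v3' v4' v5')
      = ∑ u1, p1 u1 * ∑ u3, p3 u3 * θ1 v1 u1 u3 := fun v1 => (h2 v1).trans (hBfac v1)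
  have hM2 : ∀ v1 : V1, (∑ v4', ∑ v5', P v1 v2 v3 v4' v5')
      = (∑ u1, (p1 u1 * ∑ u3, p3 u3 * θ1 v1 u1 u3) * θ3 v3 u1 v2)
        * (∑ u2, p2 u2 * θ2 v2 u2 v1) := fun v1 => (h4 v1 v2 v3).trans (hNfac v1)
  have hM3 : ∀ v1 : V1, (∑ v3', ∑ v4', ∑ v5', P v1 v2 v3' v4' v5')
      = (∑ u1, p1 u1 * ∑ u3, p3 u3 * θ1 v1 u1 u3) * (∑ u2, p2 u2 * θ2 v2 u2 v1) :=
    fun v1 => (h3 v1 v2).trans (hDfac v1)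
  have hDpos : ∀ v1 : V1, 0 < ∑ v3', ∑ v4', ∑ v5', P v1 v2 v3' v4' v5' := fun v1 =>
    Finset.sum_pos (fun v3' _ => Finset.sum_pos (fun v4' _ =>
      Finset.sum_pos (fun v5' _ => hpos _ _ _ _ _) Finset.univ_nonempty)
      Finset.univ_nonempty) Finset.univ_nonempty
  have hterm : ∀ v1 : V1,
      (∑ v2', ∑ v3', ∑ v4', ∑ v5', P v1 v2' v3' v4' v5')
        * ((∑ v4', ∑ v5', P v1 v2 v3 v4' v5')
            / (∑ v3', ∑ v4', ∑ v5', P v1 v2 v3' v4' v5'))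
      = ∑ u1, (p1 u1 * ∑ u3, p3 u3 * θ1 v1 u1 u3) * θ3 v3 u1 v2 := by
    intro v1
    have hpos1 := hDpos v1
    rw [hM3 v1] at hpos1
    have hBne : (∑ u1, p1 u1 * ∑ u3, p3 u3 * θ1 v1 u1 u3) ≠ 0 :=
      (mul_ne_zero_iff.mp (ne_of_gt hpos1)).1
    have hcne : (∑ u2, p2 u2 * θ2 v2 u2 v1) ≠ 0 :=
      (mul_ne_zero_iff.mp (ne_of_gt hpos1)).2
    rw [hM1 v1, hM2 v1, hM3 v1]
    field_simp
  rw [Finset.sum_congr rfl fun v1 _ => hterm v1]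
  rw [Finset.sum_comm]
  refine Finset.sum_congr rfl fun u1 _ => ?_
  rw [← Finset.sum_mul]
  congr 1
  rw [← Finset.mul_sum, Finset.sum_comm]
  have hone : (∑ u3, ∑ v1, p3 u3 * θ1 v1 u1 u3) = 1 := calc
    (∑ u3, ∑ v1, p3 u3 * θ1 v1 u1 u3)
      = ∑ u3, p3 u3 * ∑ v1, θ1 v1 u1 u3 := by
        refine Finset.sum_congr rfl fun u3 _ => ?_
        rw [Finset.mul_sum]
    _ = ∑ u3, p3 u3 := by simp only [hθ1s, mul_one]
    _ = 1 := hp3s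
  rw [hone, mul_one]
end

section
/- Assume the CSI constraint (X ⊥ U | A=ā): θX(x|u,false) does not depend on u, and assume P(A=false, X=x) > 0 for the given x. Then for all y, ∑_u θU(u)θY(y|u,x,false) = P(Y=y | X=x, A=false) (projection of the c-factor ∑_u θU(u)θY(y|u,x,ā) enabled by the CSI constraint, appendix CSI example). -/
/-- **Projection enabled by a CSI constraint (appendix CSI example, Fig. 8(a)).**
Model: hidden `U` finite nonempty; observed `A, X, Y` binary; `A` is a root,
`X` has parents `U, A`, and `Y` has parents `U, X, A`. Under the CSI constraint
`(X ⊥ U | A = ā)` (i.e. `θX x u false` does not depend on `u`) and assuming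
`P(A = false, X = x) > 0` for the given `x`, for all `y`,
`∑ u, θU(u) θY(y | u, x, ā) = P(Y = y | X = x, A = ā)`. -/
theorem csi_example_projection
    {U : Type*} [Fintype U] [Nonempty U]
    (θA : Bool → ℝ) (θU : U → ℝ)
    (θX : Bool → U → Bool → ℝ) (θY : Bool → U → Bool → Bool → ℝ)
    (hθA : ∀ a, 0 ≤ θA a) (hθAs : ∑ a, θA a = 1)
    (hθU : ∀ u, 0 ≤ θU u) (hθUs : ∑ u, θU u = 1)
    (hθX : ∀ x u a, 0 ≤ θX x u a) (hθXs : ∀ u a, ∑ x, θX x u a = 1)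
    (hθY : ∀ y u x a, 0 ≤ θY y u x a) (hθYs : ∀ u x a, ∑ y, θY y u x a = 1)
    -- observational joint distribution
    (P : Bool → Bool → Bool → ℝ)
    (hP : ∀ a x y, P a x y = θA a * ∑ u, θU u * θX x u a * θY y u x a)
    (x : Bool)
    -- CSI constraint (X ⊥ U | A = ā)
    (hCSI : ∀ x' u u', θX x' u false = θX x' u' false)
    -- positivity: P(A = false, X = x) > 0
    (hpos : 0 < ∑ y, P false x y) :
    ∀ y,
      (∑ u, θU u * θY y u x false)
      =
      -- P(Y = y | X = x, A = false)
      P false x y / (∑ y', P false x y') := by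
  intro y
  obtain ⟨u0⟩ := ‹Nonempty U›
  set c := θX x u0 false with hc
  have hPf : ∀ y', P false x y' = θA false * c * ∑ u, θU u * θY y' u x false := by
    intro y'
    rw [hP, Finset.mul_sum, Finset.mul_sum]
    apply Finset.sum_congr rfl
    intro u _
    rw [hCSI x u u0]
    ring
  have hsum : (∑ y', P false x y') = θA false * c := by
    simp only [hPf]
    rw [← Finset.mul_sum]
    have : (∑ y', ∑ u, θU u * θY y' u x false) = 1 := by
      rw [Finset.sum_comm]
      have : ∀ u, (∑ y', θU u * θY y' u x false) = θU u := by
        intro u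
        rw [← Finset.mul_sum, hθYs u x false, mul_one]
      simp only [this, hθUs]
    rw [this, mul_one]
  have hne : θA false * c ≠ 0 := by
    intro h
    rw [hsum, h] at hpos
    exact lt_irrefl 0 hpos
  rw [hPf y, hsum]
  field_simp
  rw [mul_assoc, mul_div_cancel_right₀ _ hne]
end

section
/- Assume the two CSI constraints (X ⊥ U | A=ā): θX(x|u,false) does not depend on u, and (X ⊥ Y | A=a, U): θY(y|u,x,true) does not depend on x; assume the observational joint distribution P is strictly positive. Then the causal effect satisfies P_x(y) = P(A=true, Y=y) + P(A=false) · P(Y=y | X=x, A=false) for all x and y; in particular, any two parameterizations satisfying these CSI constraints inducing the same strictly positive P yield the same causal effect (identifiability of the appendix CSI example). -/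
/-- **Identifiability of the appendix CSI example (Fig. 8(a)).**
Model: hidden `U` finite nonempty; observed `A, X, Y` binary; `A` is a root,
`X` has parents `U, A`, and `Y` has parents `U, X, A`. Under the CSI
constraints `(X ⊥ U | A = ā)` (i.e. `θX x u false` does not depend on `u`) and
`(X ⊥ Y | A = a, U)` (i.e. `θY y u x true` does not depend on `x`), and
assuming `P` is strictly positive, the causal effect satisfies
`P_x(y) = P(A = a, Y = y) + P(A = ā) * P(Y = y | X = x, A = ā)`. -/
theorem csi_example_identifiable
    {U : Type*} [Fintype U] [Nonempty U]
    (θA : Bool → ℝ) (θU : U → ℝ)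
    (θX : Bool → U → Bool → ℝ) (θY : Bool → U → Bool → Bool → ℝ)
    (hθA : ∀ a, 0 ≤ θA a) (hθAs : ∑ a, θA a = 1)
    (hθU : ∀ u, 0 ≤ θU u) (hθUs : ∑ u, θU u = 1)
    (hθX : ∀ x u a, 0 ≤ θX x u a) (hθXs : ∀ u a, ∑ x, θX x u a = 1)
    (hθY : ∀ y u x a, 0 ≤ θY y u x a) (hθYs : ∀ u x a, ∑ y, θY y u x a = 1)
    -- observational joint distribution
    (P : Bool → Bool → Bool → ℝ)
    (hP : ∀ a x y, P a x y = θA a * ∑ u, θU u * θX x u a * θY y u x a)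
    -- CSI constraint (X ⊥ U | A = ā)
    (hCSI1 : ∀ x u u', θX x u false = θX x u' false)
    -- CSI constraint (X ⊥ Y | A = a, U)
    (hCSI2 : ∀ y u x x', θY y u x true = θY y u x' true)
    -- strict positivity of P
    (hpos : ∀ a x y, 0 < P a x y) :
    ∀ x y,
      -- causal effect P_x(y) = ∑ a, θA(a) * ∑ u, θU(u) θY(y | u, x, a)
      (∑ a, θA a * ∑ u, θU u * θY y u x a)
      =
      -- P(A = true, Y = y)
      (∑ x', P true x' y)
      +
      -- P(A = false) * P(Y = y | X = x, A = false)
      (∑ x', ∑ y', P false x' y') * (P false x y / (∑ y', P false x y')) := by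

  intro x y
  have u0 : U := Classical.arbitrary U
  -- Term A = true
  have h1 : (∑ x', P true x' y) = θA true * ∑ u, θU u * θY y u x true := by
    simp only [hP, ← Finset.mul_sum]
    congr 1
    rw [Finset.sum_comm]
    refine Finset.sum_congr rfl fun u _ => ?_
    calc ∑ x', θU u * θX x' u true * θY y u x' true
        = ∑ x', θU u * θY y u x true * θX x' u true := by
          refine Finset.sum_congr rfl fun x' _ => ?_
          rw [hCSI2 y u x' x]; ring
      _ = θU u * θY y u x true := by
          rw [← Finset.mul_sum, hθXs, mul_one]
  -- marginal over y for A = false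
  have h2 : ∀ x', (∑ y', P false x' y') = θA false * θX x' u0 false := by
    intro x'
    simp only [hP, ← Finset.mul_sum]
    congr 1
    rw [Finset.sum_comm]
    calc ∑ u, ∑ y', θU u * θX x' u false * θY y' u x' false
        = ∑ u, θU u * θX x' u false := by
          refine Finset.sum_congr rfl fun u _ => ?_
          rw [← Finset.mul_sum, hθYs, mul_one]
      _ = ∑ u, θU u * θX x' u0 false := by
          refine Finset.sum_congr rfl fun u _ => ?_
          rw [hCSI1 x' u u0]
      _ = (∑ u, θU u) * θX x' u0 false := by rw [Finset.sum_mul]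
      _ = θX x' u0 false := by rw [hθUs, one_mul]
  have h3 : (∑ x', ∑ y', P false x' y') = θA false := by
    simp only [h2, ← Finset.mul_sum, hθXs u0 false, mul_one]
  have h4 : P false x y = (θA false * θX x u0 false) * ∑ u, θU u * θY y u x false := by
    rw [hP]
    rw [show (∑ u, θU u * θX x u false * θY y u x false)
        = θX x u0 false * ∑ u, θU u * θY y u x false from ?_]
    · ring
    · rw [Finset.mul_sum]
      refine Finset.sum_congr rfl fun u _ => ?_
      rw [hCSI1 x u u0]; ring
  have hne : θA false * θX x u0 false ≠ 0 := by
    have : 0 < ∑ y', P false x y' :=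
      Finset.sum_pos (fun y' _ => hpos false x y') ⟨true, Finset.mem_univ _⟩
    rw [h2 x] at this
    exact ne_of_gt this
  rw [h1, h3, h2 x, h4, mul_div_cancel_left₀ _ hne, Fintype.sum_bool]
end

section
/- Fix an intervention value x⋆. Assume the CSI constraint (C ⊥ U₁ | X=x⋆, U₂): θC(c|u₁,u₂,x⋆) does not depend on u₁, and assume P(A=a, X=x⋆) > 0 for all a. Then for every u₁, a, c, y: ∑_{u₂} p₂(u₂)θC(c|u₁,u₂,x⋆)θY(y|u₂,a,c) = P(C=c, Y=y | A=a, X=x⋆) (projection of the c-factor enabled by the CSI constraint, functional-dependency example). -/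
/-- **Projection enabled by a CSI constraint (functional-dependency example,
Fig. 6(b)).** Model: hidden `U1, U2` finite nonempty; observed `A, X, C, Y`
binary; `A` is a root, `X` has parents `U1, A`, `C` has parents `U1, U2, X`,
`Y` has parents `U2, A, C`. Fix an intervention value `x⋆`. Under the CSI
constraint `(C ⊥ U1 | X = x⋆, U2)` (i.e. `θC c u1 u2 x⋆` does not depend on
`u1`) and assuming `P(A = a, X = x⋆) > 0` for all `a`, for every `u1, a, c, y`,
`∑ u2, p2(u2) θC(c|u1,u2,x⋆) θY(y|u2,a,c) = P(C = c, Y = y | A = a, X = x⋆)`. -/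
theorem func_dep_example_projection
    {U1 U2 : Type*} [Fintype U1] [Nonempty U1] [Fintype U2] [Nonempty U2]
    (θA : Bool → ℝ) (p1 : U1 → ℝ) (p2 : U2 → ℝ)
    (θX : Bool → U1 → Bool → ℝ) (θC : Bool → U1 → U2 → Bool → ℝ)
    (θY : Bool → U2 → Bool → Bool → ℝ)
    (hθA : ∀ a, 0 ≤ θA a) (hθAs : ∑ a, θA a = 1)
    (hp1 : ∀ u, 0 ≤ p1 u) (hp1s : ∑ u, p1 u = 1)
    (hp2 : ∀ u, 0 ≤ p2 u) (hp2s : ∑ u, p2 u = 1)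
    (hθX : ∀ x u1 a, 0 ≤ θX x u1 a) (hθXs : ∀ u1 a, ∑ x, θX x u1 a = 1)
    (hθC : ∀ c u1 u2 x, 0 ≤ θC c u1 u2 x) (hθCs : ∀ u1 u2 x, ∑ c, θC c u1 u2 x = 1)
    (hθY : ∀ y u2 a c, 0 ≤ θY y u2 a c) (hθYs : ∀ u2 a c, ∑ y, θY y u2 a c = 1)
    -- observational joint distribution
    (P : Bool → Bool → Bool → Bool → ℝ)
    (hP : ∀ a x c y, P a x c y =
      θA a * ∑ u1, ∑ u2, p1 u1 * p2 u2 * θX x u1 a * θC c u1 u2 x * θY y u2 a c)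
    -- fixed intervention value
    (xstar : Bool)
    -- CSI constraint (C ⊥ U1 | X = x⋆, U2)
    (hCSI : ∀ c u1 u1' u2, θC c u1 u2 xstar = θC c u1' u2 xstar)
    -- positivity: P(A = a, X = x⋆) > 0 for all a
    (hpos : ∀ a, 0 < ∑ c, ∑ y, P a xstar c y) :
    ∀ u1 a c y,
      (∑ u2, p2 u2 * θC c u1 u2 xstar * θY y u2 a c)
      =
      -- P(C = c, Y = y | A = a, X = x⋆)
      P a xstar c y / (∑ c', ∑ y', P a xstar c' y') := by
  intro u1 a c y
  set K : ℝ := θA a * ∑ u1', p1 u1' * θX xstar u1' a with hK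
  have hfac : ∀ c' y', P a xstar c' y' =
      K * ∑ u2, p2 u2 * θC c' u1 u2 xstar * θY y' u2 a c' := by
    intro c' y'
    rw [hP, hK, mul_assoc]
    congr 1
    rw [Finset.sum_mul_sum]
    apply Finset.sum_congr rfl
    intro i _
    apply Finset.sum_congr rfl
    intro j _
    rw [hCSI c' i u1 j]
    ring
  have hden : (∑ c', ∑ y', P a xstar c' y') = K := by
    simp only [hfac, ← Finset.mul_sum]
    have : ∑ c', ∑ y', ∑ u2, p2 u2 * θC c' u1 u2 xstar * θY y' u2 a c' = 1 := by
      have h1 : ∀ c', ∑ y', ∑ u2, p2 u2 * θC c' u1 u2 xstar * θY y' u2 a c'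
          = ∑ u2, p2 u2 * θC c' u1 u2 xstar := by
        intro c'
        rw [Finset.sum_comm]
        apply Finset.sum_congr rfl
        intro u2 _
        rw [← Finset.mul_sum, hθYs u2 a c', mul_one]
      simp only [h1]
      rw [Finset.sum_comm]
      have h2 : ∀ u2 : U2, ∑ c', p2 u2 * θC c' u1 u2 xstar = p2 u2 := by
        intro u2
        rw [← Finset.mul_sum, hθCs u1 u2 xstar, mul_one]
      simp only [h2, hp2s]
    rw [this, mul_one]
  have hKpos : 0 < K := by rw [← hden]; exact hpos a
  rw [hfac c y, hden, mul_div_cancel_left₀ _ (ne_of_gt hKpos)]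
end

section
/- Fix an intervention value x⋆. Assume the CSI constraint (C ⊥ U₁ | X=x⋆, U₂): θC(c|u₁,u₂,x⋆) does not depend on u₁, and assume P(A=a, X=x⋆) > 0 for all a. Then the causal effect satisfies the identifying formula P_{x⋆}(y) = ∑_a P(A=a) · ∑_c P(C=c, Y=y | A=a, X=x⋆) for all y; in particular, any two parameterizations satisfying the CSI constraint and inducing the same observational distribution P (with P(A=a, X=x⋆) > 0 for all a) yield the same causal effect. -/
/-- **Identifying formula for the functional-dependency example (Fig. 6(b)).**
Model: hidden `U1, U2` finite nonempty; observed `A, X, C, Y` binary; `A` is a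
root, `X` has parents `U1, A`, `C` has parents `U1, U2, X`, `Y` has parents
`U2, A, C`. Fix an intervention value `x⋆`. Under the CSI constraint
`(C ⊥ U1 | X = x⋆, U2)` and assuming `P(A = a, X = x⋆) > 0` for all `a`, the
causal effect satisfies
`P_{x⋆}(y) = ∑ a, P(A = a) * ∑ c, P(C = c, Y = y | A = a, X = x⋆)`. -/
theorem func_dep_example_identifiable
    {U1 U2 : Type*} [Fintype U1] [Nonempty U1] [Fintype U2] [Nonempty U2]
    (θA : Bool → ℝ) (p1 : U1 → ℝ) (p2 : U2 → ℝ)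
    (θX : Bool → U1 → Bool → ℝ) (θC : Bool → U1 → U2 → Bool → ℝ)
    (θY : Bool → U2 → Bool → Bool → ℝ)
    (hθA : ∀ a, 0 ≤ θA a) (hθAs : ∑ a, θA a = 1)
    (hp1 : ∀ u, 0 ≤ p1 u) (hp1s : ∑ u, p1 u = 1)
    (hp2 : ∀ u, 0 ≤ p2 u) (hp2s : ∑ u, p2 u = 1)
    (hθX : ∀ x u1 a, 0 ≤ θX x u1 a) (hθXs : ∀ u1 a, ∑ x, θX x u1 a = 1)
    (hθC : ∀ c u1 u2 x, 0 ≤ θC c u1 u2 x) (hθCs : ∀ u1 u2 x, ∑ c, θC c u1 u2 x = 1)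
    (hθY : ∀ y u2 a c, 0 ≤ θY y u2 a c) (hθYs : ∀ u2 a c, ∑ y, θY y u2 a c = 1)
    -- observational joint distribution
    (P : Bool → Bool → Bool → Bool → ℝ)
    (hP : ∀ a x c y, P a x c y =
      θA a * ∑ u1, ∑ u2, p1 u1 * p2 u2 * θX x u1 a * θC c u1 u2 x * θY y u2 a c)
    -- fixed intervention value
    (xstar : Bool)
    -- CSI constraint (C ⊥ U1 | X = x⋆, U2)
    (hCSI : ∀ c u1 u1' u2, θC c u1 u2 xstar = θC c u1' u2 xstar)
    -- positivity: P(A = a, X = x⋆) > 0 for all a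
    (hpos : ∀ a, 0 < ∑ c, ∑ y, P a xstar c y) :
    ∀ y,
      -- causal effect P_{x⋆}(y)
      (∑ a, θA a * ∑ c, ∑ u1, ∑ u2, p1 u1 * p2 u2 * θC c u1 u2 xstar * θY y u2 a c)
      =
      -- ∑ a, P(A = a) * ∑ c, P(C = c, Y = y | A = a, X = x⋆)
      ∑ a, (∑ x, ∑ c, ∑ y', P a x c y')
          * ∑ c, (P a xstar c y / (∑ c', ∑ y', P a xstar c' y')) := by
  intro y
  obtain ⟨u0⟩ := ‹Nonempty U1›
  -- factorized form of P at x = xstar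
  have key : ∀ a c y', P a xstar c y' =
      θA a * (∑ u1, p1 u1 * θX xstar u1 a) *
        ∑ u2, p2 u2 * θC c u0 u2 xstar * θY y' u2 a c := by
    intro a c y'
    rw [hP]
    have h1 : ∀ u1 ∈ (Finset.univ : Finset U1), ∀ u2 ∈ (Finset.univ : Finset U2),
        p1 u1 * p2 u2 * θX xstar u1 a * θC c u1 u2 xstar * θY y' u2 a c
        = (p1 u1 * θX xstar u1 a) * (p2 u2 * θC c u0 u2 xstar * θY y' u2 a c) := by
      intro u1 _ u2 _
      rw [hCSI c u1 u0 u2]; ring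
    rw [Finset.sum_congr rfl fun u1 _ => Finset.sum_congr rfl fun u2 _ => h1 u1 (by simp) u2 (by simp)]
    rw [← Finset.sum_mul_sum]
    ring
  -- marginal P(A = a, X = xstar)
  have marg : ∀ a, (∑ c, ∑ y', P a xstar c y')
      = θA a * (∑ u1, p1 u1 * θX xstar u1 a) := by
    intro a
    simp_rw [key]
    have h2 : ∀ c : Bool, (∑ y' : Bool, θA a * (∑ u1, p1 u1 * θX xstar u1 a) *
        ∑ u2, p2 u2 * θC c u0 u2 xstar * θY y' u2 a c)
        = θA a * (∑ u1, p1 u1 * θX xstar u1 a) *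
          ∑ u2, p2 u2 * θC c u0 u2 xstar := by
      intro c
      rw [← Finset.mul_sum, Finset.sum_comm]
      congr 1
      refine Finset.sum_congr rfl fun u2 _ => ?_
      rw [← Finset.mul_sum, hθYs, mul_one]
    simp_rw [h2]
    rw [← Finset.mul_sum, Finset.sum_comm]
    have h3 : ∀ u2 ∈ (Finset.univ : Finset U2),
        (∑ c : Bool, p2 u2 * θC c u0 u2 xstar) = p2 u2 := by
      intro u2 _; rw [← Finset.mul_sum, hθCs, mul_one]
    rw [Finset.sum_congr rfl h3, hp2s, mul_one]
  -- marginal P(A = a)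
  have sumy : ∀ a x c, (∑ y' : Bool, ∑ u1, ∑ u2,
      p1 u1 * p2 u2 * θX x u1 a * θC c u1 u2 x * θY y' u2 a c)
      = ∑ u1, ∑ u2, p1 u1 * p2 u2 * θX x u1 a * θC c u1 u2 x := by
    intro a x c
    rw [Finset.sum_comm]
    refine Finset.sum_congr rfl fun u1 _ => ?_
    rw [Finset.sum_comm]
    refine Finset.sum_congr rfl fun u2 _ => ?_
    rw [← Finset.mul_sum, hθYs, mul_one]
  have sumc : ∀ a x, (∑ c : Bool, ∑ u1, ∑ u2,
      p1 u1 * p2 u2 * θX x u1 a * θC c u1 u2 x)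
      = ∑ u1, p1 u1 * θX x u1 a := by
    intro a x
    rw [Finset.sum_comm]
    refine Finset.sum_congr rfl fun u1 _ => ?_
    rw [Finset.sum_comm]
    have h4 : ∀ u2 ∈ (Finset.univ : Finset U2),
        (∑ c : Bool, p1 u1 * p2 u2 * θX x u1 a * θC c u1 u2 x)
        = p2 u2 * (p1 u1 * θX x u1 a) := by
      intro u2 _
      rw [← Finset.mul_sum, hθCs, mul_one]; ring
    rw [Finset.sum_congr rfl h4, ← Finset.sum_mul, hp2s, one_mul]
  have hPA : ∀ a, (∑ x, ∑ c, ∑ y', P a x c y') = θA a := by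
    intro a
    have : ∀ x ∈ (Finset.univ : Finset Bool), (∑ c, ∑ y', P a x c y')
        = θA a * ∑ u1, p1 u1 * θX x u1 a := by
      intro x _
      simp_rw [hP, ← Finset.mul_sum]
      congr 1
      rw [Finset.sum_congr rfl fun c _ => sumy a x c, sumc]
    rw [Finset.sum_congr rfl this, ← Finset.mul_sum, Finset.sum_comm]
    have h5 : ∀ u1 ∈ (Finset.univ : Finset U1),
        (∑ x : Bool, p1 u1 * θX x u1 a) = p1 u1 := by
      intro u1 _; rw [← Finset.mul_sum, hθXs, mul_one]
    rw [Finset.sum_congr rfl h5, hp1s, mul_one]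
  -- now the main computation
  refine Finset.sum_congr rfl fun a _ => ?_
  have hne : θA a * (∑ u1, p1 u1 * θX xstar u1 a) ≠ 0 := by
    have := hpos a; rw [marg a] at this; exact ne_of_gt this
  rw [hPA a]
  congr 1
  refine Finset.sum_congr rfl fun c _ => ?_
  -- LHS inner sum equals conditional
  rw [marg a, key a c y, mul_div_cancel_left₀ _ hne]
  have h6 : ∀ u1 ∈ (Finset.univ : Finset U1), ∀ u2 ∈ (Finset.univ : Finset U2),
      p1 u1 * p2 u2 * θC c u1 u2 xstar * θY y u2 a c
      = p1 u1 * (p2 u2 * θC c u0 u2 xstar * θY y u2 a c) := by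
    intro u1 _ u2 _; rw [hCSI c u1 u0 u2]; ring
  rw [Finset.sum_congr rfl fun u1 _ => Finset.sum_congr rfl fun u2 _ => h6 u1 (by simp) u2 (by simp)]
  rw [← Finset.sum_mul_sum, hp1s, one_mul]
end
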